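/- arXiv:1701.03378 — 8 statements merged into one kernel-verified Lean document; each statement's English description precedes it below -/
import Mathlib

section
/- Let f, g ∈ F be given by admissible linear systems 𝒜_f = (u_f, A_f, v_f) and 𝒜_g = (u_g, A_g, v_g) of dimensions n_f and n_g respectively. If there exist matrices T, U ∈ K^{n_f × n_g} such that u_f U = 0, T A_g − A_f U = A_f u_fᵀ u_g (an identity of matrices over F, where u_fᵀ u_g is the n_f × n_g matrix with a single 1 in position (1,1)), and T v_g = v_f, then f = g. -/
/-!
The identity `T A_g - A_f U = A_f e₁ᵀ e₁` says `T A_g = A_f P` with `P := U + e₁ᵀ e₁`, so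
`A_f⁻¹ T = P A_g⁻¹`. Hence `f = e₁ A_f⁻¹ T v_g = e₁ P A_g⁻¹ v_g`, and `e₁ P = e₁` because
`e₁ U = 0`. -/

open Matrix

/-- The row vector `e₁ = (1,0,…,0)`. -/
def e1Row (F : Type*) [Semiring F] (n : ℕ) [NeZero n] : Matrix (Fin 1) (Fin n) F :=
  Matrix.of fun _ j => if j = 0 then 1 else 0

lemma e1Row_map {K F : Type*} [Semiring K] [Semiring F] (φ : K →+* F) (n : ℕ) [NeZero n] :
    (e1Row K n).map φ = e1Row F n := by
  ext i j
  simp [e1Row, Matrix.map_apply, apply_ite φ]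

lemma e1Row_mul_single_zero_zero {F : Type*} [Semiring F] (m n : ℕ) [NeZero m] [NeZero n] :
    e1Row F m * Matrix.single (0 : Fin m) (0 : Fin n) (1 : F) = e1Row F n := by
  ext i j
  simp [e1Row, Matrix.mul_apply, Matrix.single, ite_and, eq_comm]

lemma Matrix.mul_eq_mul_of_mul_eq_mul_of_inverses {R m n : Type*} [Semiring R]
    [Fintype m] [DecidableEq m] [Fintype n] [DecidableEq n]
    {A' B' : Matrix m m R} {A B : Matrix n n R} {T S : Matrix m n R}
    (hA' : B' * A' = 1) (hA : A * B = 1) (h : T * A = A' * S) :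
    B' * T = S * B :=
  calc B' * T = B' * (T * A * B) := by rw [Matrix.mul_assoc T, hA, Matrix.mul_one]
    _ = B' * A' * (S * B) := by rw [h]; simp only [Matrix.mul_assoc]
    _ = S * B := by rw [hA', Matrix.one_mul]

theorem word_problem_sufficient_general {K F : Type*} [Field K] [DivisionRing F] [Algebra K F]
    {nf ng : ℕ} [NeZero nf] [NeZero ng]
    (f g : F)
    (Af Bf : Matrix (Fin nf) (Fin nf) F) (vf : Matrix (Fin nf) (Fin 1) K)
    (Ag Bg : Matrix (Fin ng) (Fin ng) F) (vg : Matrix (Fin ng) (Fin 1) K)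
    (hAf' : Bf * Af = 1)
    (hAg : Ag * Bg = 1)
    (hf : f = (e1Row F nf * Bf * vf.map (algebraMap K F)) 0 0)
    (hg : g = (e1Row F ng * Bg * vg.map (algebraMap K F)) 0 0)
    (T U : Matrix (Fin nf) (Fin ng) K)
    (h1 : e1Row K nf * U = 0)
    (h2 : T.map (algebraMap K F) * Ag - Af * U.map (algebraMap K F)
        = Af * Matrix.single (0 : Fin nf) (0 : Fin ng) (1 : F))
    (h3 : T * vg = vf) :
    f = g := by
  set φ := algebraMap K F
  set P := U.map φ + Matrix.single 0 0 1
  have hv : T.map φ * vg.map φ = vf.map φ := by rw [← Matrix.map_mul, h3]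
  have hU : e1Row F nf * U.map φ = 0 := by
    simpa [Matrix.map_mul, e1Row_map] using congrArg (Matrix.map · φ) h1
  have hTP : T.map φ * Ag = Af * P := by rw [Matrix.mul_add, ← h2]; abel
  have hBT : Bf * T.map φ = P * Bg := mul_eq_mul_of_mul_eq_mul_of_inverses hAf' hAg hTP
  rw [hf, hg, ← hv, ← Matrix.mul_assoc, Matrix.mul_assoc (e1Row F nf) Bf, hBT,
    ← Matrix.mul_assoc, Matrix.mul_add, hU, zero_add, e1Row_mul_single_zero_zero]

/-- If `f` and `g` are given by admissible linear systems `(e₁, A_f, v_f)` and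
`(e₁, A_g, v_g)` over a division ring `F` which is a `K`-algebra, and there exist
matrices `T, U` over `K` with `e₁ U = 0`, `T A_g - A_f U = A_f e₁ᵀ e₁` and
`T v_g = v_f`, then `f = g`. -/
theorem word_problem_sufficient {K F : Type*} [Field K] [DivisionRing F] [Algebra K F]
    {nf ng : ℕ} [NeZero nf] [NeZero ng]
    (f g : F)
    (Af Bf : Matrix (Fin nf) (Fin nf) F) (vf : Matrix (Fin nf) (Fin 1) K)
    (Ag Bg : Matrix (Fin ng) (Fin ng) F) (vg : Matrix (Fin ng) (Fin 1) K)
    (hAf : Af * Bf = 1) (hAf' : Bf * Af = 1)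
    (hAg : Ag * Bg = 1) (hAg' : Bg * Ag = 1)
    (hf : f = (e1Row F nf * Bf * vf.map (algebraMap K F)) 0 0)
    (hg : g = (e1Row F ng * Bg * vg.map (algebraMap K F)) 0 0)
    (T U : Matrix (Fin nf) (Fin ng) K)
    (h1 : e1Row K nf * U = 0)
    (h2 : T.map (algebraMap K F) * Ag - Af * U.map (algebraMap K F)
        = Af * Matrix.single (0 : Fin nf) (0 : Fin ng) (1 : F))
    (h3 : T * vg = vf) :
    f = g :=
  word_problem_sufficient_general f g Af Bf vf Ag Bg vg hAf' hAg hf hg T U h1 h2 h3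
end

section
/- Let f, g ∈ F be given by admissible linear systems 𝒜_f = (u_f, A_f, v_f) and 𝒜_g = (u_g, A_g, v_g) of dimensions n_f and n_g, with left families s_f = A_f⁻¹ v_f and s_g = A_g⁻¹ v_g. Then the block matrix A = [[A_f, −A_f u_fᵀ u_g], [0, A_g]] ∈ F^{(n_f+n_g)×(n_f+n_g)} (where u_fᵀ u_g is the n_f × n_g matrix with a single 1 in position (1,1)) is invertible over F, the solution vector of the system A s = [v_f; v_g] is s = [s_f + u_fᵀ g; s_g], and consequently (e₁, A, [v_f; v_g]) is an admissible linear system for f + g. -/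
/-!
The block matrix `A` is upper block-triangular with invertible diagonal blocks, so it has the
explicit two-sided inverse `B = [[B_f, e₁ᵀe₁ B_g], [0, B_g]]`. Since `e₁ᵀe₁ B_g v_g` puts the first
entry `g` of `s_g` into position 1, `B [v_f; v_g] = [s_f + e₁ᵀ g; s_g] = s`, whose first entry
is `f + g`.
-/

open Matrix

lemma e1Row_mul_apply {F : Type*} [Semiring F] {n : ℕ} [NeZero n] {m : Type*}
    (M : Matrix (Fin n) m F) (j : m) : (e1Row F n * M) 0 j = M 0 j := by
  simp [e1Row, mul_apply, ite_mul]

namespace Matrix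

variable {l m n o α : Type*}

lemma single_mul_of_unique [Fintype m] [DecidableEq l] [DecidableEq m] [DecidableEq o] [Unique o]
    [NonUnitalNonAssocSemiring α] (i : l) (j : m) (c : α) (M : Matrix m o α) :
    single i j c * M = single i default (c * M j default) := by
  ext a b
  obtain rfl := Unique.eq_default b
  by_cases ha : a = i
  · subst ha; simp
  · rw [single_mul_apply_of_ne _ _ _ _ _ ha, single_apply_of_row_ne (Ne.symm ha)]

section BlockTriangular

variable [Fintype m] [Fintype n] [DecidableEq m] [DecidableEq n] [Ring α]
  {A A' : Matrix m m α} {D D' : Matrix n n α}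

lemma fromBlocks_zero₂₁_mul_eq_one (B : Matrix m n α) (hA : A * A' = 1) (hD : D * D' = 1) :
    fromBlocks A B 0 D * fromBlocks A' (-(A' * B * D')) 0 D' = 1 := by
  rw [fromBlocks_multiply, ← fromBlocks_one]
  simp only [Matrix.mul_neg, ← Matrix.mul_assoc, hA, hD, Matrix.one_mul, Matrix.zero_mul,
    Matrix.mul_zero, add_zero, neg_zero, zero_add, neg_add_cancel]

lemma fromBlocks_zero₂₁_inv_mul_eq_one (B : Matrix m n α) (hA : A' * A = 1) (hD : D' * D = 1) :
    fromBlocks A' (-(A' * B * D')) 0 D' * fromBlocks A B 0 D = 1 := by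
  rw [fromBlocks_multiply, ← fromBlocks_one]
  simp only [Matrix.neg_mul, Matrix.mul_assoc, hA, hD, Matrix.mul_one, Matrix.zero_mul,
    Matrix.mul_zero, add_zero, zero_add, add_neg_cancel]

end BlockTriangular

end Matrix

/-- The admissible linear system for the sum `f + g`: the block matrix
`A = [[A_f, −A_f e₁ᵀ e₁], [0, A_g]]` is invertible over `F`, the solution of
`A s = [v_f; v_g]` is `s = [s_f + e₁ᵀ g; s_g]`, and `(e₁, A, [v_f; v_g])` is an
admissible linear system for `f + g`. -/
theorem als_sum {K F : Type*} [Field K] [DivisionRing F] [Algebra K F]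
    {nf ng : ℕ} [NeZero nf] [NeZero ng]
    (f g : F)
    (Af Bf : Matrix (Fin nf) (Fin nf) F) (vf : Matrix (Fin nf) (Fin 1) K)
    (Ag Bg : Matrix (Fin ng) (Fin ng) F) (vg : Matrix (Fin ng) (Fin 1) K)
    (hAf : Af * Bf = 1) (hAf' : Bf * Af = 1)
    (hAg : Ag * Bg = 1) (hAg' : Bg * Ag = 1)
    (hf : f = (e1Row F nf * Bf * vf.map (algebraMap K F)) 0 0)
    (hg : g = (e1Row F ng * Bg * vg.map (algebraMap K F)) 0 0) :
    let A : Matrix (Fin nf ⊕ Fin ng) (Fin nf ⊕ Fin ng) F :=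
      fromBlocks Af (-(Af * Matrix.single (0 : Fin nf) (0 : Fin ng) (1 : F))) 0 Ag
    let v : Matrix (Fin nf ⊕ Fin ng) (Fin 1) F :=
      fromRows (vf.map (algebraMap K F)) (vg.map (algebraMap K F))
    let s : Matrix (Fin nf ⊕ Fin ng) (Fin 1) F :=
      fromRows (Bf * vf.map (algebraMap K F) + Matrix.single (0 : Fin nf) (0 : Fin 1) g)
        (Bg * vg.map (algebraMap K F))
    (A * s = v) ∧ ∃ B, A * B = 1 ∧ B * A = 1 ∧ (B * v) (Sum.inl 0) 0 = f + g := by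
  intro A v s
  set E : Matrix (Fin nf) (Fin ng) F := single 0 0 1
  set B := fromBlocks Bf (E * Bg) 0 Bg
  have hB : B = fromBlocks Bf (-(Bf * -(Af * E) * Bg)) 0 Bg := by
    simp only [B, Matrix.mul_neg, Matrix.neg_mul, neg_neg, ← Matrix.mul_assoc, hAf',
      Matrix.one_mul]
  have hAB : A * B = 1 := hB ▸ fromBlocks_zero₂₁_mul_eq_one _ hAf hAg
  have hBA : B * A = 1 := hB ▸ fromBlocks_zero₂₁_inv_mul_eq_one _ hAf' hAg'
  have hBv : B * v = s := by
    rw [fromBlocks_mul_fromRows, Matrix.zero_mul, zero_add, Matrix.mul_assoc,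
      single_mul_of_unique, one_mul, Fin.default_eq_zero]
    simp only [s, hg, Matrix.mul_assoc, e1Row_mul_apply]
  refine ⟨by rw [← hBv, ← Matrix.mul_assoc, hAB, Matrix.one_mul], B, hAB, hBA, ?_⟩
  rw [hBv, hf, Matrix.mul_assoc, e1Row_mul_apply]
  simp [s]
end

section
/- Let f, g ∈ F be given by admissible linear systems 𝒜_f = (u_f, A_f, v_f) and 𝒜_g = (u_g, A_g, v_g) of dimensions n_f and n_g, with left families s_f = A_f⁻¹ v_f and s_g = A_g⁻¹ v_g. Then the block matrix A = [[A_f, −v_f u_g], [0, A_g]] ∈ F^{(n_f+n_g)×(n_f+n_g)} (where v_f u_g is the n_f × n_g matrix whose first column is v_f and whose other columns are zero) is invertible over F, the solution vector of the system A s = [0; v_g] is s = [s_f g; s_g], and consequently (e₁, A, [0; v_g]) is an admissible linear system for the product f g. -/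
open Matrix

lemma e1Row_mul {F : Type*} [Semiring F] {n : ℕ} [NeZero n]
    (X : Matrix (Fin n) (Fin 1) F) :
    e1Row F n * X = Matrix.of fun _ _ => X 0 0 := by
  ext i j
  have hj : j = 0 := Subsingleton.elim _ _
  simp [e1Row, mul_apply, hj, ite_mul]

/-- The admissible linear system for the product `f g`: the block matrix
`A = [[A_f, −v_f u_g], [0, A_g]]` is invertible over `F`, the solution of
`A s = [0; v_g]` is `s = [s_f g; s_g]`, and `(e₁, A, [0; v_g])` is an
admissible linear system for `f g`. -/
theorem als_product {K F : Type*} [Field K] [DivisionRing F] [Algebra K F]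
    {nf ng : ℕ} [NeZero nf] [NeZero ng]
    (f g : F)
    (Af Bf : Matrix (Fin nf) (Fin nf) F) (vf : Matrix (Fin nf) (Fin 1) K)
    (Ag Bg : Matrix (Fin ng) (Fin ng) F) (vg : Matrix (Fin ng) (Fin 1) K)
    (hAf : Af * Bf = 1) (hAf' : Bf * Af = 1)
    (hAg : Ag * Bg = 1) (hAg' : Bg * Ag = 1)
    (hf : f = (e1Row F nf * Bf * vf.map (algebraMap K F)) 0 0)
    (hg : g = (e1Row F ng * Bg * vg.map (algebraMap K F)) 0 0) :
    let A : Matrix (Fin nf ⊕ Fin ng) (Fin nf ⊕ Fin ng) F :=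
      fromBlocks Af (-(vf.map (algebraMap K F) * e1Row F ng)) 0 Ag
    let v : Matrix (Fin nf ⊕ Fin ng) (Fin 1) F :=
      fromRows 0 (vg.map (algebraMap K F))
    let s : Matrix (Fin nf ⊕ Fin ng) (Fin 1) F :=
      fromRows (Matrix.of fun i _ => (Bf * vf.map (algebraMap K F)) i 0 * g)
        (Bg * vg.map (algebraMap K F))
    (A * s = v) ∧ ∃ B, A * B = 1 ∧ B * A = 1 ∧ (B * v) (Sum.inl 0) 0 = f * g := by
  intro A v s
  set vf' := vf.map (algebraMap K F) with hvf'
  set vg' := vg.map (algebraMap K F) with hvg'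
  have hf' : f = (Bf * vf') 0 0 := by
    rw [hf, Matrix.mul_assoc, e1Row_mul]; rfl
  have hg' : g = (Bg * vg') 0 0 := by
    rw [hg, Matrix.mul_assoc, e1Row_mul]; rfl
  have key : vf' * (e1Row F ng * (Bg * vg')) =
      Matrix.of fun i (_ : Fin 1) => vf' i 0 * g := by
    rw [e1Row_mul]
    ext i j
    simp [mul_apply, hg']
  have h1 : Af * (Matrix.of fun i (_ : Fin 1) => (Bf * vf') i 0 * g) =
      Matrix.of fun i (_ : Fin 1) => vf' i 0 * g := by
    ext i j
    have : (Af * (Bf * vf')) i 0 = vf' i 0 := by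
      rw [← Matrix.mul_assoc, hAf, Matrix.one_mul]
    simp only [mul_apply, Matrix.of_apply, ← mul_assoc, ← Finset.sum_mul]
    rw [show (∑ x, Af i x * ∑ j, Bf x j * vf' j 0) = vf' i 0 from by
      simpa [mul_apply] using this]
  have hright : Bf * vf' * e1Row F ng * Bg * vg' =
      Bf * Matrix.of fun i (_ : Fin 1) => vf' i 0 * g := by
    rw [Matrix.mul_assoc (Bf * vf' * e1Row F ng), Matrix.mul_assoc (Bf * vf'),
      Matrix.mul_assoc Bf, key]
  constructor
  · show fromBlocks Af (-(vf' * e1Row F ng)) 0 Ag *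
      fromRows (Matrix.of fun i _ => (Bf * vf') i 0 * g) (Bg * vg') = fromRows 0 vg'
    rw [fromBlocks_mul_fromRows]
    have htop : Af * (Matrix.of fun i (_ : Fin 1) => (Bf * vf') i 0 * g) +
        -(vf' * e1Row F ng) * (Bg * vg') = 0 := by
      rw [h1, Matrix.neg_mul, Matrix.mul_assoc, key]
      simp
    have hbot : (0 : Matrix (Fin ng) (Fin nf) F) *
        (Matrix.of fun i (_ : Fin 1) => (Bf * vf') i 0 * g) + Ag * (Bg * vg') = vg' := by
      rw [Matrix.zero_mul, zero_add, ← Matrix.mul_assoc, hAg, Matrix.one_mul]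
    rw [htop, hbot]
  · refine ⟨fromBlocks Bf (Bf * vf' * e1Row F ng * Bg) 0 Bg, ?_, ?_, ?_⟩
    · rw [fromBlocks_multiply, ← fromBlocks_one]
      have e12 : Af * (Bf * vf' * e1Row F ng * Bg) + -(vf' * e1Row F ng) * Bg = 0 := by
        rw [← Matrix.mul_assoc, ← Matrix.mul_assoc, ← Matrix.mul_assoc, hAf,
          Matrix.one_mul, Matrix.neg_mul]
        abel
      rw [Matrix.mul_zero, add_zero, hAf, e12, Matrix.zero_mul, Matrix.mul_zero,
        add_zero, Matrix.zero_mul, zero_add, hAg]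
    · rw [fromBlocks_multiply, ← fromBlocks_one]
      have e12 : Bf * -(vf' * e1Row F ng) + Bf * vf' * e1Row F ng * Bg * Ag = 0 := by
        rw [Matrix.mul_assoc (Bf * vf' * e1Row F ng), hAg', Matrix.mul_one,
          Matrix.mul_neg, ← Matrix.mul_assoc]
        abel
      rw [Matrix.mul_zero, add_zero, hAf', e12, Matrix.zero_mul, Matrix.mul_zero,
        add_zero, Matrix.zero_mul, zero_add, hAg']
    · have hBv : fromBlocks Bf (Bf * vf' * e1Row F ng * Bg) 0 Bg * v =
          fromRows (Bf * Matrix.of fun i (_ : Fin 1) => vf' i 0 * g) (Bg * vg') := by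
        show fromBlocks Bf (Bf * vf' * e1Row F ng * Bg) 0 Bg * fromRows 0 vg' = _
        rw [fromBlocks_mul_fromRows, Matrix.mul_zero, zero_add, Matrix.zero_mul,
          zero_add, hright]
      rw [hBv]
      simp [mul_apply, hf', ← Finset.sum_mul, ← mul_assoc, Fin.sum_univ_one]
end

section
/- Let f, g ∈ F be given by admissible linear systems 𝒜_f = (u_f, A_f, v_f) and 𝒜_g = (u_g, A_g, v_g) of dimensions n_f and n_g, and form the (1+n_f+n_g) × (1+n_f+n_g) block matrix M = [[0, u_f, u_g], [v_f, A_f, 0], [v_g, 0, −A_g]] over F. Then M is invertible over F if and only if f ≠ g. -/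
open Matrix

/-!
The lower-right block `D = diag(A_f, -A_g)` of `M` is invertible, so `M` is invertible iff its
Schur complement `0 - (u_f, u_g) D⁻¹ (v_f; v_g) = g - f` is. The factorisation of a block matrix
through its Schur complement holds over any ring, whereas Mathlib states the resulting
invertibility criterion (`Matrix.isUnit_fromBlocks_iff_of_invertible₂₂`) only over commutative
rings.
-/

section SchurComplement

variable {m n α : Type*} [Fintype m] [Fintype n] [DecidableEq m] [DecidableEq n] [Ring α]

theorem fromBlocks_eq_mul_schur_mul (A : Matrix m m α) (B : Matrix m n α) (C : Matrix n m α)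
    (D : Matrix n n α) [Invertible D] :
    fromBlocks A B C D = fromBlocks 1 (B * ⅟D) 0 1 * fromBlocks (A - B * ⅟D * C) 0 0 D *
      fromBlocks 1 0 (⅟D * C) 1 := by
  simp [fromBlocks_multiply, Matrix.mul_assoc, Matrix.mul_invOf_cancel_left]

theorem isUnit_fromBlocks_one_zero₂₁_one (B : Matrix m n α) :
    IsUnit (fromBlocks 1 B 0 1 : Matrix (m ⊕ n) (m ⊕ n) α) :=
  isUnit_iff_exists.mpr ⟨fromBlocks 1 (-B) 0 1,
    by simp [fromBlocks_multiply, ← fromBlocks_one],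
    by simp [fromBlocks_multiply, ← fromBlocks_one]⟩

theorem isUnit_fromBlocks_one_zero₁₂_one (C : Matrix n m α) :
    IsUnit (fromBlocks 1 0 C 1 : Matrix (m ⊕ n) (m ⊕ n) α) :=
  isUnit_iff_exists.mpr ⟨fromBlocks 1 0 (-C) 1,
    by simp [fromBlocks_multiply, ← fromBlocks_one],
    by simp [fromBlocks_multiply, ← fromBlocks_one]⟩

theorem isUnit_fromBlocks_zero₁₂_zero₂₁_iff (A : Matrix m m α) (D : Matrix n n α)
    [Invertible D] :
    IsUnit (fromBlocks A 0 0 D) ↔ IsUnit A := by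
  simp only [isUnit_iff_exists]
  constructor
  · rintro ⟨N, hMN, hNM⟩
    rw [← fromBlocks_toBlocks N, fromBlocks_multiply, ← fromBlocks_one, fromBlocks_inj]
      at hMN hNM
    exact ⟨N.toBlocks₁₁, by simpa using hMN.1, by simpa using hNM.1⟩
  · rintro ⟨A', hAA', hA'A⟩
    exact ⟨fromBlocks A' 0 0 ⅟D, by simp [fromBlocks_multiply, hAA', ← fromBlocks_one],
      by simp [fromBlocks_multiply, hA'A, ← fromBlocks_one]⟩

theorem isUnit_fromBlocks_iff_isUnit_schur (A : Matrix m m α) (B : Matrix m n α)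
    (C : Matrix n m α) (D : Matrix n n α) [Invertible D] :
    IsUnit (fromBlocks A B C D) ↔ IsUnit (A - B * ⅟D * C) := by
  rw [fromBlocks_eq_mul_schur_mul, (isUnit_fromBlocks_one_zero₁₂_one _).mul_right_iff,
    (isUnit_fromBlocks_one_zero₂₁_one _).mul_left_iff,
    isUnit_fromBlocks_zero₁₂_zero₂₁_iff]

end SchurComplement

theorem Matrix.isUnit_iff_apply_ne_zero_of_unique {m K : Type*} [Fintype m] [DecidableEq m]
    [Unique m] [DivisionRing K] (M : Matrix m m K) :
    IsUnit M ↔ M default default ≠ 0 := by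
  have mul_apply_default (N P : Matrix m m K) :
      (N * P) default default = N default default * P default default := by
    simp [mul_apply]
  rw [isUnit_iff_exists]
  constructor
  · rintro ⟨N, hMN, -⟩
    refine left_ne_zero_of_mul_eq_one (b := N default default) ?_
    simpa [mul_apply_default] using congrFun₂ hMN default default
  · intro hM
    refine ⟨of fun _ _ => (M default default)⁻¹, ?_, ?_⟩ <;>
    · ext i j
      rw [Unique.eq_default i, Unique.eq_default j, mul_apply_default]
      simp [hM]

/-- If `f` and `g` are given by admissible linear systems, then the linearization
`M = [[0, u_f, u_g], [v_f, A_f, 0], [v_g, 0, −A_g]]` of `f − g` is invertible over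
the division ring `F` if and only if `f ≠ g`. -/
theorem linearization_invertible_iff_ne {K F : Type*} [Field K] [DivisionRing F] [Algebra K F]
    {nf ng : ℕ} [NeZero nf] [NeZero ng]
    (f g : F)
    (Af Bf : Matrix (Fin nf) (Fin nf) F) (vf : Matrix (Fin nf) (Fin 1) K)
    (Ag Bg : Matrix (Fin ng) (Fin ng) F) (vg : Matrix (Fin ng) (Fin 1) K)
    (hAf : Af * Bf = 1) (hAf' : Bf * Af = 1)
    (hAg : Ag * Bg = 1) (hAg' : Bg * Ag = 1)
    (hf : f = (e1Row F nf * Bf * vf.map (algebraMap K F)) 0 0)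
    (hg : g = (e1Row F ng * Bg * vg.map (algebraMap K F)) 0 0) :
    let M : Matrix (Fin 1 ⊕ (Fin nf ⊕ Fin ng)) (Fin 1 ⊕ (Fin nf ⊕ Fin ng)) F :=
      fromBlocks 0 (fromCols (e1Row F nf) (e1Row F ng))
        (fromRows (vf.map (algebraMap K F)) (vg.map (algebraMap K F)))
        (fromBlocks Af 0 0 (-Ag))
    IsUnit M ↔ f ≠ g := by
  intro M
  let _ : Invertible (fromBlocks Af 0 0 (-Ag)) :=
    ⟨fromBlocks Bf 0 0 (-Bg), by simp [fromBlocks_multiply, hAf', hAg', ← fromBlocks_one],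
      by simp [fromBlocks_multiply, hAf, hAg, ← fromBlocks_one]⟩
  have hinv : ⅟(fromBlocks Af 0 0 (-Ag)) = fromBlocks Bf 0 0 (-Bg) := rfl
  have hschur : ((0 : Matrix (Fin 1) (Fin 1) F) -
      fromCols (e1Row F nf) (e1Row F ng) * ⅟(fromBlocks Af 0 0 (-Ag)) *
        fromRows (vf.map (algebraMap K F)) (vg.map (algebraMap K F))) 0 0 = g - f := by
    rw [hinv, fromCols_mul_fromBlocks, fromCols_mul_fromRows]
    simp [hf, hg, Matrix.mul_assoc, ← sub_eq_add_neg]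
  rw [isUnit_fromBlocks_iff_isUnit_schur, isUnit_iff_apply_ne_zero_of_unique,
    Fin.default_eq_zero, hschur, sub_ne_zero, ne_comm]
end

section
/- Let c ∈ F, u ∈ F^{1×m}, v ∈ F^{m×1} and A ∈ F^{m×m} with A invertible over F, and set f = c − u A⁻¹ v. Define the (m+2) × (m+2) matrix Ã = [[c, u, −1], [v, A, 0], [−1, 0, 0]] and the vectors ũ = (0,…,0,1) ∈ K^{1×(m+2)}, ṽ = ũᵀ. Then Ã is invertible over F and −ũ Ã⁻¹ ṽ = f; that is, the pure linearization (ũ, Ã, ṽ) represents the same element f. -/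
/-!
The inverse of `Ã` is explicit: with `B = A⁻¹` it is
`[[0, 0, −1], [0, B, B v], [−1, u B, u B v − c]]`, as block multiplication checks directly,
and `ũ Ã⁻¹ ṽ` is its bottom-right corner `u B v − c = −f`.
-/

open Matrix

namespace Matrix

variable {R k n m : Type*} [Add R]

theorem fromRows_add_fromRows (A₁ B₁ : Matrix n k R) (A₂ B₂ : Matrix m k R) :
    fromRows A₁ A₂ + fromRows B₁ B₂ = fromRows (A₁ + B₁) (A₂ + B₂) := by
  ext (i | i) j <;> rfl

theorem fromCols_add_fromCols (A₁ B₁ : Matrix k n R) (A₂ B₂ : Matrix k m R) :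
    fromCols A₁ A₂ + fromCols B₁ B₂ = fromCols (A₁ + B₁) (A₂ + B₂) := by
  ext i (j | j) <;> rfl

end Matrix

section

variable {R n m : Type*} [Ring R] [Fintype n] [Fintype m] [DecidableEq n] [DecidableEq m]

def pureLinearization (c : Matrix n n R) (u : Matrix n m R) (v : Matrix m n R)
    (A : Matrix m m R) :
    Matrix ((n ⊕ m) ⊕ n) ((n ⊕ m) ⊕ n) R :=
  fromBlocks (fromBlocks c u v A) (fromRows (-1) 0) (fromCols (-1) 0) 0

def pureLinearizationInv (c : Matrix n n R) (u : Matrix n m R) (v : Matrix m n R)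
    (B : Matrix m m R) :
    Matrix ((n ⊕ m) ⊕ n) ((n ⊕ m) ⊕ n) R :=
  fromBlocks (fromBlocks 0 0 0 B) (fromRows (-1) (B * v)) (fromCols (-1) (u * B)) (u * B * v - c)

variable (c : Matrix n n R) (u : Matrix n m R) (v : Matrix m n R) {A B : Matrix m m R}

theorem pureLinearization_mul_pureLinearizationInv (h : A * B = 1) :
    pureLinearization c u v A * pureLinearizationInv c u v B = 1 := by
  rw [pureLinearization, pureLinearizationInv, fromBlocks_multiply, fromBlocks_multiply,
    fromBlocks_mul_fromRows, fromCols_mul_fromBlocks, fromRows_mul_fromCols, fromCols_mul_fromRows]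
  simp [← Matrix.mul_assoc, h, fromBlocks_add, fromRows_add_fromRows]

theorem pureLinearizationInv_mul_pureLinearization (h : B * A = 1) :
    pureLinearizationInv c u v B * pureLinearization c u v A = 1 := by
  rw [pureLinearization, pureLinearizationInv, fromBlocks_multiply, fromBlocks_multiply,
    fromBlocks_mul_fromRows, fromCols_mul_fromBlocks, fromRows_mul_fromCols, fromCols_mul_fromRows]
  simp [Matrix.mul_assoc, h, fromBlocks_add, fromCols_add_fromCols]

end

theorem pure_linearization_extension_general {F : Type*} [DivisionRing F]
    {m : ℕ}
    (c : F) (u : Matrix (Fin 1) (Fin m) F) (v : Matrix (Fin m) (Fin 1) F)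
    (A B : Matrix (Fin m) (Fin m) F)
    (hB : A * B = 1) (hB' : B * A = 1)
    (f : F) (hf : f = c - (u * B * v) 0 0) :
    let Atil : Matrix ((Fin 1 ⊕ Fin m) ⊕ Fin 1) ((Fin 1 ⊕ Fin m) ⊕ Fin 1) F :=
      fromBlocks (fromBlocks (Matrix.of fun _ _ => c) u v A)
        (fromRows (Matrix.of fun _ _ => (-1 : F)) 0)
        (fromCols (Matrix.of fun _ _ => (-1 : F)) 0) 0
    let util : Matrix (Fin 1) ((Fin 1 ⊕ Fin m) ⊕ Fin 1) F :=
      Matrix.of fun _ j => if j = Sum.inr 0 then 1 else 0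
    let vtil : Matrix ((Fin 1 ⊕ Fin m) ⊕ Fin 1) (Fin 1) F :=
      Matrix.of fun i _ => if i = Sum.inr 0 then 1 else 0
    ∃ Btil, Atil * Btil = 1 ∧ Btil * Atil = 1 ∧
      -((util * Btil * vtil) 0 0) = f := by
  intro Atil util vtil
  have hneg_one : (of fun _ _ => (-1 : F) : Matrix (Fin 1) (Fin 1) F) = -1 := by
    ext i j
    simp [Subsingleton.elim i j]
  have hAtil : Atil = pureLinearization (of fun _ _ => c) u v A := by
    rw [pureLinearization, ← hneg_one]
  refine ⟨pureLinearizationInv (of fun _ _ => c) u v B, ?_, ?_, ?_⟩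
  · rw [hAtil, pureLinearization_mul_pureLinearizationInv _ _ _ hB]
  · rw [hAtil, pureLinearizationInv_mul_pureLinearization _ _ _ hB']
  · simp [util, vtil, pureLinearizationInv, mul_apply, hf]

/-- Given a linearization `L = [[c, u], [v, A]]` of `f = c − u A⁻¹ v`, the enlarged pure
linearization `Ã = [[c, u, −1], [v, A, 0], [−1, 0, 0]]` with `ũ = (0,…,0,1)`, `ṽ = ũᵀ`
is invertible over `F` and `−ũ Ã⁻¹ ṽ = f`. -/
theorem pure_linearization_extension {K F : Type*} [Field K] [DivisionRing F] [Algebra K F]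
    {m : ℕ}
    (c : F) (u : Matrix (Fin 1) (Fin m) F) (v : Matrix (Fin m) (Fin 1) F)
    (A B : Matrix (Fin m) (Fin m) F)
    (hB : A * B = 1) (hB' : B * A = 1)
    (f : F) (hf : f = c - (u * B * v) 0 0) :
    let Atil : Matrix ((Fin 1 ⊕ Fin m) ⊕ Fin 1) ((Fin 1 ⊕ Fin m) ⊕ Fin 1) F :=
      fromBlocks (fromBlocks (Matrix.of fun _ _ => c) u v A)
        (fromRows (Matrix.of fun _ _ => (-1 : F)) 0)
        (fromCols (Matrix.of fun _ _ => (-1 : F)) 0) 0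
    let util : Matrix (Fin 1) ((Fin 1 ⊕ Fin m) ⊕ Fin 1) F :=
      Matrix.of fun _ j => if j = Sum.inr 0 then 1 else 0
    let vtil : Matrix ((Fin 1 ⊕ Fin m) ⊕ Fin 1) (Fin 1) F :=
      Matrix.of fun i _ => if i = Sum.inr 0 then 1 else 0
    ∃ Btil, Atil * Btil = 1 ∧ Btil * Atil = 1 ∧
      -((util * Btil * vtil) 0 0) = f :=
  pure_linearization_extension_general c u v A B hB hB' f hf
end

section
/- Let f ∈ F with f ≠ 0 be given by an admissible linear system 𝒜 = (u, A, v) of dimension n with left family s_f = A⁻¹ v. Then the (n+1) × (n+1) block matrix A' = [[Σ_n v, −Σ_n A Σ_n], [0, u Σ_n]] is invertible over F, the solution vector of A' s = e_{n+1} is s = [f⁻¹; Σ_n s_f f⁻¹], and consequently 𝒜⁻¹ = (e₁, A', e_{n+1}) (the standard inverse of 𝒜) is an admissible linear system of dimension n+1 for f⁻¹. -/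
/-! The matrix `A'` has the bordered shape `[[x, -M], [0, y]]` with `M = Σ A Σ`, `x = Σ v`,
`y = e₁ Σ`. Such a matrix is invertible as soon as `M` is, say with inverse `N`, and the `1 × 1`
block `c = y N x` is invertible: the inverse is `[[c⁻¹ y N, c⁻¹], [N x c⁻¹ y N - N, N x c⁻¹]]`.
Since `Σ² = 1`, here `N = Σ B Σ` and `c = e₁ B v = f`. The last column of the inverse is the
claimed solution `s = [f⁻¹; Σ s_f f⁻¹]`, and its first entry is `f⁻¹`. -/

open Matrix

/-- The permutation matrix `Σ_n` reversing the order of rows/columns. -/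
def revMat (F : Type*) [Semiring F] (n : ℕ) : Matrix (Fin n) (Fin n) F :=
  Matrix.of fun p q => if q = p.rev then 1 else 0

theorem revMat_mul_revMat (F : Type*) [Semiring F] (n : ℕ) : revMat F n * revMat F n = 1 := by
  ext p r
  simp only [revMat, mul_apply, of_apply, ite_mul, one_mul, zero_mul, one_apply]
  rw [Finset.sum_ite_eq' Finset.univ p.rev (fun x => if r = x.rev then (1 : F) else 0)]
  simp [Fin.rev_rev, eq_comm]

theorem conj_mul_conj_eq_one {M : Type*} [Monoid M] {s a b : M} (hs : s * s = 1)
    (hab : a * b = 1) : s * a * s * (s * b * s) = 1 := by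
  calc s * a * s * (s * b * s) = s * (a * (s * s) * b) * s := by simp only [mul_assoc]
    _ = 1 := by rw [hs, mul_one, hab, mul_one, hs]

section BorderedInverse

variable {R : Type*} [Ring R] {m n : Type*} [Fintype m] [Fintype n] [DecidableEq m]

def borderedInv (x : Matrix n m R) (N : Matrix n n R) (y : Matrix m n R) (c : Matrix m m R) :
    Matrix (m ⊕ n) (n ⊕ m) R :=
  fromBlocks (c * y * N) c (N * x * c * y * N - N) (N * x * c)

variable {x : Matrix n m R} {M N : Matrix n n R} {y : Matrix m n R} {c : Matrix m m R}

theorem fromBlocks_mul_borderedInv [DecidableEq n] (hMN : M * N = 1) (hc : y * N * x * c = 1) :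
    fromBlocks x (-M) 0 y * borderedInv x N y c = 1 := by
  rw [borderedInv, fromBlocks_multiply, ← fromBlocks_one, fromBlocks_inj]
  refine ⟨?_, ?_, ?_, ?_⟩ <;>
    simp only [Matrix.mul_sub, Matrix.neg_mul, ← Matrix.mul_assoc, hMN, hc, Matrix.one_mul,
      Matrix.zero_mul, zero_add] <;> abel

theorem borderedInv_mul_fromBlocks [DecidableEq n] (hNM : N * M = 1) (hc : c * (y * N * x) = 1) :
    borderedInv x N y c * fromBlocks x (-M) 0 y = 1 := by
  rw [borderedInv, fromBlocks_multiply, ← fromBlocks_one, fromBlocks_inj]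
  simp only [Matrix.mul_assoc] at hc
  refine ⟨?_, ?_, ?_, ?_⟩ <;>
    simp only [Matrix.sub_mul, Matrix.mul_neg, Matrix.mul_assoc, hNM, hc, Matrix.mul_one,
      Matrix.mul_zero, add_zero] <;> abel

theorem borderedInv_mul_fromRows_zero_one :
    borderedInv x N y c * fromRows (0 : Matrix n m R) (1 : Matrix m m R) =
      fromRows c (N * x * c) := by
  rw [borderedInv, fromBlocks_mul_fromRows]
  simp

end BorderedInverse

theorem of_const_mul_of_const {R : Type*} [Semiring R] {m : Type*} [Fintype m] [Unique m]
    (a b : R) : (of fun _ _ => a : Matrix m m R) * of (fun _ _ => b) = of fun _ _ => a * b := by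
  ext; simp [mul_apply]

theorem of_const_one {R : Type*} [Semiring R] {m : Type*} [Unique m] [DecidableEq m] :
    (of fun _ _ => 1 : Matrix m m R) = 1 := by
  ext i j; simp [one_apply, Subsingleton.elim i j]

/-- The standard inverse: if `f ≠ 0` is given by an ALS `(e₁, A, v)` of dimension `n`
with left family `s_f`, then `A' = [[Σ v, −Σ A Σ], [0, e₁ Σ]]` is invertible over `F`,
the solution of `A' s = e_{n+1}` is `s = [f⁻¹; Σ s_f f⁻¹]`, and `(e₁, A', e_{n+1})` is
an admissible linear system of dimension `n+1` for `f⁻¹`. -/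
theorem standard_inverse {K F : Type*} [Field K] [DivisionRing F] [Algebra K F]
    {n : ℕ} [NeZero n]
    (f : F) (hne : f ≠ 0)
    (A B : Matrix (Fin n) (Fin n) F) (v : Matrix (Fin n) (Fin 1) K)
    (hAB : A * B = 1) (hBA : B * A = 1)
    (hf : f = (e1Row F n * B * v.map (algebraMap K F)) 0 0) :
    let A' : Matrix (Fin n ⊕ Fin 1) (Fin 1 ⊕ Fin n) F :=
      fromBlocks (revMat F n * v.map (algebraMap K F)) (-(revMat F n * A * revMat F n))
        0 (e1Row F n * revMat F n)
    let v' : Matrix (Fin n ⊕ Fin 1) (Fin 1) F :=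
      fromRows 0 (1 : Matrix (Fin 1) (Fin 1) F)
    let s : Matrix (Fin 1 ⊕ Fin n) (Fin 1) F :=
      fromRows (Matrix.of fun _ _ => f⁻¹)
        (Matrix.of fun p (_ : Fin 1) => (revMat F n * (B * v.map (algebraMap K F))) p 0 * f⁻¹)
    (A' * s = v') ∧ ∃ B' : Matrix (Fin 1 ⊕ Fin n) (Fin n ⊕ Fin 1) F,
      A' * B' = 1 ∧ B' * A' = 1 ∧ (B' * v') (Sum.inl 0) 0 = f⁻¹ := by
  intro A' v' s
  set S := revMat F n
  set vF := v.map (algebraMap K F)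
  have hS : S * S = 1 := revMat_mul_revMat F n
  have hschur : e1Row F n * S * (S * B * S) * (S * vF) = of fun _ _ => f := by
    ext i j
    simp only [Matrix.mul_assoc, ← Matrix.mul_assoc S S, hS, Matrix.one_mul]
    simp only [← Matrix.mul_assoc, hf, Subsingleton.elim i 0, Subsingleton.elim j 0, of_apply]
  let B' := borderedInv (S * vF) (S * B * S) (e1Row F n * S) (of fun _ _ => f⁻¹)
  have hAB' : A' * B' = 1 := fromBlocks_mul_borderedInv (conj_mul_conj_eq_one hS hAB)
    (by rw [hschur, of_const_mul_of_const, mul_inv_cancel₀ hne, of_const_one])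
  have hs : s = B' * v' := by
    simp only [B', v', borderedInv_mul_fromRows_zero_one]
    ext (i | p) j <;> simp [s, S, vF, Matrix.mul_assoc, mul_apply, ← Matrix.mul_assoc S S, hS,
      Finset.sum_mul, mul_assoc]
  refine ⟨by rw [hs, ← Matrix.mul_assoc, hAB', Matrix.one_mul], B', hAB', ?_, ?_⟩
  · exact borderedInv_mul_fromBlocks (conj_mul_conj_eq_one hS hBA)
      (by rw [hschur, of_const_mul_of_const, inv_mul_cancel₀ hne, of_const_one])
  · rw [← hs]; rfl
end

section
/- Let K be a commutative field and X = {x₁,…,x_d} a finite alphabet. Let A be a linear n × n matrix over the free associative algebra K⟨X⟩, i.e. A = A₀ + A₁ x₁ + … + A_d x_d with A₀,…,A_d ∈ K^{n×n}. If A is not full, then A is associated over K to a linear hollow matrix: there exist invertible matrices P, Q ∈ K^{n×n} such that P A Q is hollow. -/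
/-!
We work in `K[FreeMonoid X] ≃ₐ[K] FreeAlgebra K X`, graded by word length. Write `A = T U` with
`T` of size `n × m`, `U` of size `m × n` and `m < n`, and replace `(T, U)` by `(T E, E⁻¹ U)` for
elementary matrices `E` until, for every inner index `k`, column `k` of `T` or row `k` of `U` is
constant. While some `k` has both nonconstant, the products `T p k U k q` of maximal degree
`D ≥ 2` cancel in their top homogeneous parts, because `A` is linear; by the weak algorithm of the
free algebra the top part of some row `k` of `U` is then a homogeneous left combination of the
others, and subtracting that combination lowers the degree of row `k`, hence the total degree of
the rows of `U`.
Once the factorization is split, let `Z` be the set of `k` with row `k` of `U` constant: an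
invertible `Q` over `K` can bring `n - |Z|` columns into the kernel of these constant rows, and an
invertible `P` can bring `n - (m - |Z|)` rows into the left kernel of the remaining constant
columns of `T`, so `P A Q` has a zero block of total size `2n - m > n`.
-/

open Finset Matrix
open scoped MonoidAlgebra Pointwise

theorem MonoidAlgebra.mul_mem_supported {k M : Type*} [Semiring k] [Monoid M] {s t : Set M}
    {x y : k[M]} (hx : x ∈ supported k k s) (hy : y ∈ supported k k t) :
    x * y ∈ supported k k (s * t) := by
  classical
  intro w hw
  obtain ⟨u, hu, v, hv, rfl⟩ := Finset.mem_mul.mp (support_coeff_mul_subset x y hw)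
  exact Set.mul_mem_mul (hx hu) (hy hv)

theorem Matrix.mul_one_add_updateRow_mul_updateRow {R ι κ ι' : Type*} [Ring R] [Fintype κ]
    [DecidableEq κ] (T : Matrix ι κ R) (U : Matrix κ ι' R) {k : κ} {c : κ → R} (hc : c k = 0) :
    T * (1 + updateRow 0 k c) * U.updateRow k (U k - c ᵥ* U) = T * U := by
  set N : Matrix κ κ R := updateRow 0 k c
  have hNN : N * N = 0 := by
    ext i j
    simp [N, updateRow_mul, updateRow_apply, vecMul, dotProduct, hc]
  have hU : U.updateRow k (U k - c ᵥ* U) = (1 - N) * U := by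
    rw [Matrix.sub_mul, Matrix.one_mul, updateRow_mul, Matrix.zero_mul]
    ext i j
    by_cases hi : i = k <;> simp [updateRow_apply, hi]
  have hinv : (1 + N) * (1 - N) = 1 := by
    rw [mul_sub, mul_one, add_mul, one_mul, hNN, add_zero, add_sub_cancel_right]
  rw [hU, Matrix.mul_assoc, ← Matrix.mul_assoc (1 + N), hinv, Matrix.one_mul]

namespace FreeMonoidAlgebra

variable {K X : Type*}

section Grading

variable [Semiring K]

variable (K) in
noncomputable abbrev degreeLE (t : ℕ) : Submodule K K[FreeMonoid X] :=
  MonoidAlgebra.supported K K {w | w.length ≤ t}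

variable (K) in
noncomputable abbrev degreeLT (t : ℕ) : Submodule K K[FreeMonoid X] :=
  MonoidAlgebra.supported K K {w | w.length < t}

variable (K) in
noncomputable abbrev homogeneous (t : ℕ) : Submodule K K[FreeMonoid X] :=
  MonoidAlgebra.supported K K {w | w.length = t}

theorem degreeLT_succ (t : ℕ) : degreeLT K (t + 1) = degreeLE K (X := X) t := by
  simp only [degreeLT, degreeLE, Nat.lt_succ_iff]

theorem degreeLT_zero : degreeLT K 0 = (⊥ : Submodule K K[FreeMonoid X]) := by
  ext x
  simp [MonoidAlgebra.mem_supported]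

theorem homogeneous_le_degreeLE (t : ℕ) : homogeneous K t ≤ degreeLE K (X := X) t :=
  MonoidAlgebra.supported_mono fun _ h => le_of_eq h

variable {x y : K[FreeMonoid X]} {s t : ℕ}

theorem mul_mem_degreeLE (hx : x ∈ degreeLE K s) (hy : y ∈ degreeLE K t) :
    x * y ∈ degreeLE K (s + t) :=
  MonoidAlgebra.supported_mono (by rintro _ ⟨u, hu, v, hv, rfl⟩; simp_all; omega)
    (MonoidAlgebra.mul_mem_supported hx hy)

theorem mul_mem_homogeneous (hx : x ∈ homogeneous K s) (hy : y ∈ homogeneous K t) :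
    x * y ∈ homogeneous K (s + t) :=
  MonoidAlgebra.supported_mono (by rintro _ ⟨u, hu, v, hv, rfl⟩; simp_all)
    (MonoidAlgebra.mul_mem_supported hx hy)

theorem mul_mem_degreeLT_left (hx : x ∈ degreeLT K s) (hy : y ∈ degreeLE K t) :
    x * y ∈ degreeLT K (s + t) :=
  MonoidAlgebra.supported_mono (by rintro _ ⟨u, hu, v, hv, rfl⟩; simp_all; omega)
    (MonoidAlgebra.mul_mem_supported hx hy)

theorem mul_mem_degreeLT_right (hx : x ∈ degreeLE K s) (hy : y ∈ degreeLT K t) :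
    x * y ∈ degreeLT K (s + t) :=
  MonoidAlgebra.supported_mono (by rintro _ ⟨u, hu, v, hv, rfl⟩; simp_all; omega)
    (MonoidAlgebra.mul_mem_supported hx hy)

variable (K) in
noncomputable def homogeneousComponent (t : ℕ) : K[FreeMonoid X] →ₗ[K] K[FreeMonoid X] where
  toFun x := .ofCoeff (x.coeff.filter fun w => w.length = t)
  map_add' x y := by ext; simp [Finsupp.filter_add]
  map_smul' c x := by ext; simp [Finsupp.filter_smul]

theorem coeff_homogeneousComponent (w : FreeMonoid X) :
    (homogeneousComponent K t x).coeff w = if w.length = t then x.coeff w else 0 :=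
  Finsupp.filter_apply _ _ _

theorem homogeneousComponent_mem (t : ℕ) (x : K[FreeMonoid X]) :
    homogeneousComponent K t x ∈ homogeneous K t := by
  intro w hw
  by_contra h
  simp_all [coeff_homogeneousComponent]

theorem homogeneousComponent_of_mem (hx : x ∈ homogeneous K t) :
    homogeneousComponent K t x = x := by
  ext w
  rw [coeff_homogeneousComponent]
  split_ifs with h
  · rfl
  · exact (MonoidAlgebra.mem_supported'.mp hx w h).symm

theorem homogeneousComponent_of_mem_degreeLT (hx : x ∈ degreeLT K t) :
    homogeneousComponent K t x = 0 := by
  ext w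
  rw [coeff_homogeneousComponent]
  split_ifs with h
  · exact MonoidAlgebra.mem_supported'.mp hx w (by simp [h])
  · rfl

theorem homogeneousComponent_of_mem_degreeLE (hx : x ∈ degreeLE K s) (h : s < t) :
    homogeneousComponent K t x = 0 :=
  homogeneousComponent_of_mem_degreeLT
    (MonoidAlgebra.supported_mono (fun _ (hw : _ ≤ s) => lt_of_le_of_lt hw h) hx)

theorem coeff_one_eq_zero_of_mem_homogeneous (hx : x ∈ homogeneous K (t + 1)) : x.coeff 1 = 0 :=
  MonoidAlgebra.mem_supported'.mp hx 1 (by simp)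

theorem single_mem_degreeLE {w : FreeMonoid X} (h : w.length ≤ t) (c : K) :
    MonoidAlgebra.single w c ∈ degreeLE K t := by
  rw [MonoidAlgebra.mem_supported, MonoidAlgebra.coeff_single]
  exact (Finset.coe_subset.mpr Finsupp.support_single_subset).trans (by simpa using h)

end Grading

section RingGrading

variable [Ring K] {x y : K[FreeMonoid X]} {s t : ℕ}

theorem sub_homogeneousComponent_mem_degreeLT (hx : x ∈ degreeLE K t) :
    x - homogeneousComponent K t x ∈ degreeLT K t := by
  refine MonoidAlgebra.mem_supported'.mpr fun w hw => ?_
  have hw : ¬ w.length < t := hw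
  rw [MonoidAlgebra.coeff_sub, Finsupp.sub_apply, coeff_homogeneousComponent]
  split_ifs with h
  · exact sub_self _
  · rw [MonoidAlgebra.mem_supported'.mp hx w (by simp at h ⊢; omega), sub_zero]

theorem mem_degreeLT_of_homogeneousComponent_eq_zero (hx : x ∈ degreeLE K t)
    (h : homogeneousComponent K t x = 0) : x ∈ degreeLT K t := by
  simpa [h] using sub_homogeneousComponent_mem_degreeLT hx

theorem homogeneousComponent_add_mul (hx : x ∈ degreeLE K s) (hy : y ∈ degreeLE K t) :
    homogeneousComponent K (s + t) (x * y) =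
      homogeneousComponent K s x * homogeneousComponent K t y := by
  set xs := homogeneousComponent K s x
  set yt := homogeneousComponent K t y
  have hxs : xs ∈ degreeLE K s := homogeneous_le_degreeLE s (homogeneousComponent_mem s x)
  have hxy : x * y = xs * yt + xs * (y - yt) + (x - xs) * y := by noncomm_ring
  rw [hxy, map_add, map_add, homogeneousComponent_of_mem
      (mul_mem_homogeneous (homogeneousComponent_mem s x) (homogeneousComponent_mem t y)),
    homogeneousComponent_of_mem_degreeLT
      (mul_mem_degreeLT_right hxs (sub_homogeneousComponent_mem_degreeLT hy)),
    homogeneousComponent_of_mem_degreeLT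
      (mul_mem_degreeLT_left (sub_homogeneousComponent_mem_degreeLT hx) hy), add_zero, add_zero]

theorem homogeneousComponent_sum_mul {κ : Type*} (s : Finset κ) {x y : κ → K[FreeMonoid X]}
    {α β : κ → ℕ} {D : ℕ} (hx : ∀ k, x k ∈ degreeLE K (α k)) (hy : ∀ k, y k ∈ degreeLE K (β k))
    (hD : ∀ k, α k + β k ≤ D) :
    homogeneousComponent K D (∑ k ∈ s, x k * y k) = ∑ k ∈ s, if α k + β k = D then
      homogeneousComponent K (α k) (x k) * homogeneousComponent K (β k) (y k) else 0 := by
  rw [map_sum]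
  refine Finset.sum_congr rfl fun k _ => ?_
  split_ifs with h
  · rw [← h, homogeneousComponent_add_mul (hx k) (hy k)]
  · exact homogeneousComponent_of_mem_degreeLE (mul_mem_degreeLE (hx k) (hy k))
      (lt_of_le_of_ne (hD k) h)

theorem sub_vecMul_mem_degreeLT {κ ι : Type*} [Fintype κ] {u : Matrix κ ι K[FreeMonoid X]}
    {β : κ → ℕ} (hu : ∀ j q, u j q ∈ degreeLE K (β j)) {k : κ} {c : κ → K[FreeMonoid X]}
    (hc : ∀ j, c j ≠ 0 → β j ≤ β k ∧ c j ∈ homogeneous K (β k - β j))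
    (htop : (fun q => homogeneousComponent K (β k) (u k q)) =
      c ᵥ* Matrix.of fun j q => homogeneousComponent K (β j) (u j q)) (q : ι) :
    (u k - c ᵥ* u) q ∈ degreeLT K (β k) := by
  have hterm : ∀ j, c j * u j q ∈ degreeLE K (β k) ∧ homogeneousComponent K (β k) (c j * u j q) =
      c j * homogeneousComponent K (β j) (u j q) := fun j => by
    by_cases hcj : c j = 0
    · simp [hcj]
    obtain ⟨hle, hhom⟩ := hc j hcj
    rw [← Nat.sub_add_cancel hle]
    exact ⟨mul_mem_degreeLE (homogeneous_le_degreeLE _ hhom) (hu j q),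
      by rw [homogeneousComponent_add_mul (homogeneous_le_degreeLE _ hhom) (hu j q),
        homogeneousComponent_of_mem hhom]⟩
  refine mem_degreeLT_of_homogeneousComponent_eq_zero
    (sub_mem (hu k q) (Submodule.sum_mem _ fun j _ => (hterm j).1)) ?_
  simp only [Pi.sub_apply, vecMul, dotProduct, map_sub, map_sum, fun j => (hterm j).2]
  rw [congrFun htop q, sub_eq_zero]
  rfl

end RingGrading

section Constants

variable [CommSemiring K] {x : K[FreeMonoid X]}

theorem algebraMap_mem_degreeLE (c : K) (t : ℕ) :
    algebraMap K K[FreeMonoid X] c ∈ degreeLE K t := by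
  rw [MonoidAlgebra.coe_algebraMap]
  exact single_mem_degreeLE (by simp) c

theorem algebraMap_coeff_one (hx : x ∈ degreeLE K 0) : algebraMap K _ (x.coeff 1) = x := by
  classical
  rw [MonoidAlgebra.coe_algebraMap]
  ext w
  simp only [Function.comp_apply, Algebra.algebraMap_self, RingHom.id_apply,
    MonoidAlgebra.coeff_single]
  rw [Finsupp.single_apply]
  split_ifs with h
  · rw [h]
  · exact (MonoidAlgebra.mem_supported'.mp hx w (by simpa [eq_comm] using h)).symm

end Constants

section Transduction

variable [Semiring K] {x y : K[FreeMonoid X]} {t : ℕ}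

variable (K) in
noncomputable def leftTransduction (i : X) : K[FreeMonoid X] →ₗ[K] K[FreeMonoid X] :=
  (MonoidAlgebra.coeffLinearEquiv K).symm.toLinearMap ∘ₗ
    Finsupp.lcomapDomain (FreeMonoid.of i * ·) (mul_right_injective _) ∘ₗ
      (MonoidAlgebra.coeffLinearEquiv K).toLinearMap

theorem coeff_leftTransduction (i : X) (w : FreeMonoid X) :
    (leftTransduction K i x).coeff w = x.coeff (FreeMonoid.of i * w) :=
  rfl

theorem leftTransduction_mem_homogeneous (i : X) (hx : x ∈ homogeneous K (t + 1)) :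
    leftTransduction K i x ∈ homogeneous K t := by
  refine MonoidAlgebra.mem_supported'.mpr fun w hw => ?_
  rw [coeff_leftTransduction]
  exact MonoidAlgebra.mem_supported'.mp hx _ (by simp at hw ⊢; omega)

theorem eq_zero_of_leftTransduction_eq_zero (h₁ : x.coeff 1 = 0)
    (h : ∀ i, leftTransduction K i x = 0) : x = 0 := by
  ext w
  induction w using FreeMonoid.casesOn with
  | one => exact h₁
  | of_mul i w => rw [← coeff_leftTransduction, h i]; rfl

theorem leftTransduction_single_of_mul [DecidableEq X] (i j : X) (z : K[FreeMonoid X]) :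
    leftTransduction K i (MonoidAlgebra.single (FreeMonoid.of j) 1 * z) =
      if j = i then z else 0 := by
  ext w
  rw [coeff_leftTransduction]
  split_ifs with hji
  · rw [hji, MonoidAlgebra.coeff_single_mul_mul, one_mul]
  · refine MonoidAlgebra.coeff_single_mul_of_forall_mul_ne _ _ fun v hv => hji ?_
    exact (by simpa using congrArg FreeMonoid.toList hv : j = i ∧ v = w).1

theorem leftTransduction_mul (i : X) (h₁ : x.coeff 1 = 0) (y : K[FreeMonoid X]) :
    leftTransduction K i (x * y) = leftTransduction K i x * y := by
  classical
  have hx : x ∈ MonoidAlgebra.supported K K {w | w ≠ 1} :=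
    MonoidAlgebra.mem_supported'.mpr fun w hw => by simp_all
  rw [MonoidAlgebra.supported_eq_span_single] at hx
  clear h₁
  induction hx using Submodule.span_induction with
  | mem z hz =>
    obtain ⟨w, hw, rfl⟩ := hz
    induction w using FreeMonoid.casesOn with
    | one => exact absurd rfl hw
    | of_mul j w =>
      have hjw : MonoidAlgebra.single (FreeMonoid.of j * w) (1 : K) =
          MonoidAlgebra.single (FreeMonoid.of j) 1 * MonoidAlgebra.single w 1 := by
        rw [MonoidAlgebra.single_mul_single, one_mul]
      simp only [hjw, mul_assoc, leftTransduction_single_of_mul]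
      split_ifs <;> simp
  | zero => simp
  | add z z' _ _ hz hz' => rw [add_mul, map_add, map_add, hz, hz', add_mul]
  | smul c z _ hz => rw [smul_mul_assoc, map_smul, map_smul, hz, smul_mul_assoc]

end Transduction

section LeftDependence

variable [Field K] {κ ι : Type*} [Fintype κ]

theorem eq_vecMul_of_vecMul_eq_zero [DecidableEq κ] {u : Matrix κ ι K[FreeMonoid X]}
    {a : κ → K[FreeMonoid X]} (hrel : a ᵥ* u = 0) {k : κ} {c : K} (hk : a k = algebraMap K _ c)
    (hc : c ≠ 0) :
    u k = Function.update (-c⁻¹ • a) k 0 ᵥ* u := by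
  funext q
  have h := congrFun hrel q
  simp only [vecMul, dotProduct, Pi.zero_apply] at h ⊢
  rw [← Finset.add_sum_erase _ _ (mem_univ k)] at h
  rw [← Finset.add_sum_erase _ _ (mem_univ k), Function.update_self, zero_mul, zero_add,
    Finset.sum_congr rfl fun j hj => by rw [Function.update_of_ne (Finset.ne_of_mem_erase hj)]]
  calc u k q = -c⁻¹ • -(a k * u k q) := by
        rw [hk, ← Algebra.smul_def, smul_neg, neg_smul, neg_neg, smul_smul, inv_mul_cancel₀ hc,
          one_smul]
    _ = _ := by
        simp only [← eq_neg_of_add_eq_zero_right h, Finset.smul_sum, Pi.smul_apply, smul_mul_assoc]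

theorem leftTransduction_vecMul {u : Matrix κ ι K[FreeMonoid X]} {a : κ → K[FreeMonoid X]}
    (h₁ : ∀ k, (a k).coeff 1 = 0) (i : X) :
    (leftTransduction K i ∘ a) ᵥ* u = leftTransduction K i ∘ (a ᵥ* u) := by
  funext q
  simp [vecMul, dotProduct, leftTransduction_mul i (h₁ _)]

/-- The weak algorithm of the free algebra, for homogeneous relations. Left transduction strips
the first letter off every coefficient of the relation, lowering `D`, until some coefficient is a
nonzero constant, which can then be divided out. -/
theorem exists_eq_vecMul_of_vecMul_eq_zero [DecidableEq κ] (D : ℕ) (t : κ → ℕ)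
    (u : Matrix κ ι K[FreeMonoid X]) (a : κ → K[FreeMonoid X])
    (ha : ∀ k, a k ≠ 0 → t k ≤ D ∧ a k ∈ homogeneous K (D - t k))
    (hrel : a ᵥ* u = 0) (hne : a ≠ 0) :
    ∃ k, a k ≠ 0 ∧ ∃ c : κ → K[FreeMonoid X], c k = 0 ∧
      (∀ j, c j ≠ 0 → t j ≤ t k ∧ c j ∈ homogeneous K (t k - t j)) ∧ u k = c ᵥ* u := by
  induction D using Nat.strong_induction_on generalizing a with
  | _ D ih =>
  by_cases hD : ∃ k, a k ≠ 0 ∧ t k = D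
  · obtain ⟨k, hak, rfl⟩ := hD
    have hk0 : a k ∈ degreeLE K 0 :=
      homogeneous_le_degreeLE 0 (by simpa using (ha k hak).2)
    have hc : (a k).coeff 1 ≠ 0 := fun h => hak (by rw [← algebraMap_coeff_one hk0, h, map_zero])
    refine ⟨k, hak, _, Function.update_self .., fun j hj => ?_,
      eq_vecMul_of_vecMul_eq_zero hrel (algebraMap_coeff_one hk0).symm hc⟩
    have hjk : j ≠ k := by rintro rfl; simp at hj
    rw [Function.update_of_ne hjk] at hj ⊢
    have haj : a j ≠ 0 := fun h => hj (by simp [h])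
    exact ⟨(ha j haj).1, Submodule.smul_mem _ _ (ha j haj).2⟩
  push Not at hD
  obtain ⟨k₀, hk₀⟩ : ∃ k, a k ≠ 0 := Function.ne_iff.mp hne
  obtain ⟨D, rfl⟩ : ∃ D', D = D' + 1 :=
    ⟨D - 1, by have := (ha k₀ hk₀).1; have := hD k₀ hk₀; omega⟩
  have ha' : ∀ k, a k ≠ 0 → t k ≤ D ∧ a k ∈ homogeneous K (D - t k + 1) := fun k hk => by
    obtain ⟨hle, hhom⟩ := ha k hk
    have := hD k hk
    exact ⟨by omega, by rwa [show D + 1 - t k = D - t k + 1 by omega] at hhom⟩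
  have h₁ : ∀ k, (a k).coeff 1 = 0 := fun k => by
    by_cases hk : a k = 0
    · simp [hk]
    · exact coeff_one_eq_zero_of_mem_homogeneous (ha' k hk).2
  obtain ⟨i, hi⟩ : ∃ i, leftTransduction K i (a k₀) ≠ 0 := by
    by_contra! h
    exact hk₀ (eq_zero_of_leftTransduction_eq_zero (h₁ k₀) h)
  obtain ⟨k, hk, rest⟩ := ih D (Nat.lt_succ_self D) (leftTransduction K i ∘ a)
    (fun k hk => by
      have hak : a k ≠ 0 := fun h => hk (by simp [h])
      exact ⟨(ha' k hak).1, leftTransduction_mem_homogeneous i (ha' k hak).2⟩)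
    (by rw [leftTransduction_vecMul h₁, hrel]; funext; simp)
    (Function.ne_iff.mpr ⟨k₀, hi⟩)
  exact ⟨k, fun h => hk (by simp [h]), rest⟩

end LeftDependence

section Height

variable [Semiring K] {ι : Type*} [Fintype ι] {v : ι → K[FreeMonoid X]} {t : ℕ}

/-- The `+ 1` makes `height v = 0` exactly when `v = 0`. -/
noncomputable def height (v : ι → K[FreeMonoid X]) : ℕ :=
  univ.sup fun q => (v q).coeff.support.sup fun w => w.length + 1

theorem height_le_iff : height v ≤ t ↔ ∀ q, v q ∈ degreeLT K t := by
  simp only [height, Finset.sup_le_iff, mem_univ, true_imp_iff, MonoidAlgebra.mem_supported,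
    Set.subset_def, Finset.mem_coe, Set.mem_ofPred_eq, Nat.lt_iff_add_one_le]

theorem height_eq_zero_iff : height v = 0 ↔ v = 0 := by
  rw [← Nat.le_zero, height_le_iff, degreeLT_zero, funext_iff]
  simp only [Submodule.mem_bot, Pi.zero_apply]

theorem mem_degreeLE_height_sub_one (q : ι) : v q ∈ degreeLE K (height v - 1) := by
  rw [← degreeLT_succ]
  exact height_le_iff.mp (by omega) q

end Height

section RingHeight

variable [Ring K] {ι : Type*} [Fintype ι] {v : ι → K[FreeMonoid X]}

theorem exists_homogeneousComponent_height_ne_zero (hv : v ≠ 0) :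
    ∃ q, homogeneousComponent K (height v - 1) (v q) ≠ 0 := by
  by_contra! h
  have : height v ≤ height v - 1 := height_le_iff.mpr fun q =>
    mem_degreeLT_of_homogeneousComponent_eq_zero (mem_degreeLE_height_sub_one q) (h q)
  exact hv (height_eq_zero_iff.mp (by omega))

end RingHeight

section ZeroColumns

variable [Semiring K] {ι κ ι' : Type*} [Fintype κ]

/-- Discarding the columns of `T` that meet only zero rows of `U`, and vice versa, keeps the top
relation of `exists_top_row_eq_vecMul` nontrivial. -/
theorem exists_mul_eq_and_forall_transpose_eq_zero_iff [Fintype ι']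
    (T : Matrix ι κ K[FreeMonoid X]) (U : Matrix κ ι' K[FreeMonoid X]) :
    ∃ (T' : Matrix ι κ K[FreeMonoid X]) (U' : Matrix κ ι' K[FreeMonoid X]), T' * U' = T * U ∧
      (∀ k, T'ᵀ k = 0 ↔ U' k = 0) ∧ ∀ k, height (U' k) ≤ height (U k) := by
  classical
  refine ⟨Matrix.of fun p k => if U k = 0 then 0 else T p k,
    Matrix.of fun k => if Tᵀ k = 0 then 0 else U k, ?_, fun k => ?_, fun k => ?_⟩
  · refine Matrix.ext fun p q => ?_
    simp only [mul_apply, of_apply]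
    refine Finset.sum_congr rfl fun k _ => ?_
    by_cases hU : U k = 0
    · simp [hU]
    by_cases hT : Tᵀ k = 0
    · simp [hU, hT, show T p k = 0 from congrFun hT p]
    · simp [hU, hT]
  · have hT' : (Matrix.of fun p k => if U k = 0 then 0 else T p k)ᵀ k =
        if U k = 0 then 0 else Tᵀ k := by
      funext p
      split_ifs with h <;> simp [h]
    change _ ↔ (if Tᵀ k = 0 then 0 else U k) = 0
    rw [hT']
    split_ifs <;> simp_all
  · change height (if Tᵀ k = 0 then 0 else U k) ≤ _
    split_ifs
    · exact (height_eq_zero_iff.mpr rfl).trans_le (Nat.zero_le _)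
    · rfl

end ZeroColumns

section Reduction

variable [Field K] {ι κ ι' : Type*} [Fintype κ] [DecidableEq κ]

/-- The entries of `T * U` have degree `≤ 1 < α k₁ + β k₁`, so the top homogeneous parts of the
products `T p₁ k * U k q` cancel: a homogeneous left relation among the top parts of the rows of
`U`, to which the weak algorithm applies. -/
theorem exists_top_row_eq_vecMul (T : Matrix ι κ K[FreeMonoid X])
    (U : Matrix κ ι' K[FreeMonoid X]) (hTU : ∀ p q, (T * U) p q ∈ degreeLE K 1) {α β : κ → ℕ}
    (hTdeg : ∀ p k, T p k ∈ degreeLE K (α k)) (hUdeg : ∀ k q, U k q ∈ degreeLE K (β k))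
    {k₁ : κ} (hD : ∀ k, α k + β k ≤ α k₁ + β k₁) (hD2 : 2 ≤ α k₁ + β k₁) {p₁ : ι}
    (hp₁ : homogeneousComponent K (α k₁) (T p₁ k₁) ≠ 0) :
    ∃ k, T p₁ k ≠ 0 ∧ ∃ c : κ → K[FreeMonoid X], c k = 0 ∧
      (∀ j, c j ≠ 0 → β j ≤ β k ∧ c j ∈ homogeneous K (β k - β j)) ∧
      (fun q => homogeneousComponent K (β k) (U k q)) =
        c ᵥ* Matrix.of fun j q => homogeneousComponent K (β j) (U j q) := by
  set a : κ → K[FreeMonoid X] := fun k =>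
    if α k + β k = α k₁ + β k₁ then homogeneousComponent K (α k) (T p₁ k) else 0 with ha
  have hrel : a ᵥ* Matrix.of (fun k q => homogeneousComponent K (β k) (U k q)) = 0 := by
    funext q
    have := homogeneousComponent_sum_mul univ (fun k => hTdeg p₁ k) (fun k => hUdeg k q) hD
    rw [← mul_apply, homogeneousComponent_of_mem_degreeLE (hTU p₁ q) (by omega)] at this
    simp only [vecMul, dotProduct, ha, ite_mul, zero_mul, of_apply, Pi.zero_apply, ← this]
  obtain ⟨k, hak, rest⟩ := exists_eq_vecMul_of_vecMul_eq_zero (α k₁ + β k₁) β _ a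
    (fun k hk => by
      by_cases h : α k + β k = α k₁ + β k₁
      · simp only [ha, h, if_true] at hk ⊢
        exact ⟨by omega,
          by rw [show α k₁ + β k₁ - β k = α k by omega]; exact homogeneousComponent_mem _ _⟩
      · simp [ha, h] at hk)
    hrel (Function.ne_iff.mpr ⟨k₁, by simpa [ha] using hp₁⟩)
  exact ⟨k, fun h => hak (by simp [ha, h]), rest⟩

theorem exists_mul_eq_sum_height_lt [Fintype ι] [Fintype ι'] (T : Matrix ι κ K[FreeMonoid X])
    (U : Matrix κ ι' K[FreeMonoid X]) (hTU : ∀ p q, (T * U) p q ∈ degreeLE K 1)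
    (hzero : ∀ k, Tᵀ k = 0 ↔ U k = 0) {k₀ : κ} (hT : 1 < height (Tᵀ k₀))
    (hU : 1 < height (U k₀)) :
    ∃ (T' : Matrix ι κ K[FreeMonoid X]) (U' : Matrix κ ι' K[FreeMonoid X]),
      T' * U' = T * U ∧ ∑ k, height (U' k) < ∑ k, height (U k) := by
  obtain ⟨α, hα⟩ : ∃ α : κ → ℕ, ∀ k, α k = height (Tᵀ k) - 1 := ⟨_, fun _ => rfl⟩
  obtain ⟨β, hβ⟩ : ∃ β : κ → ℕ, ∀ k, β k = height (U k) - 1 := ⟨_, fun _ => rfl⟩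
  obtain ⟨k₁, -, hk₁⟩ := exists_mem_eq_sup univ ⟨k₀, mem_univ _⟩ fun k => α k + β k
  have hD : ∀ k, α k + β k ≤ α k₁ + β k₁ :=
    fun k => hk₁ ▸ le_sup (f := fun k => α k + β k) (mem_univ k)
  have hD2 : 2 ≤ α k₁ + β k₁ := by have := hD k₀; rw [hα, hβ] at this; omega
  have hTk₁ : Tᵀ k₁ ≠ 0 := fun h => by
    have hU₁ := (hzero k₁).mp h
    rw [← height_eq_zero_iff] at h hU₁
    rw [hα, hβ, h, hU₁] at hD2
    omega
  obtain ⟨p₁, hp₁⟩ := exists_homogeneousComponent_height_ne_zero hTk₁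
  have hUdeg : ∀ k q, U k q ∈ degreeLE K (β k) := fun k q => hβ k ▸ mem_degreeLE_height_sub_one q
  obtain ⟨k, hTk, c, hck, hc, hdep⟩ := exists_top_row_eq_vecMul T U hTU
    (fun p k => hα k ▸ mem_degreeLE_height_sub_one (v := Tᵀ k) p) hUdeg hD hD2 (hα k₁ ▸ hp₁)
  have hUk : height (U k) = β k + 1 := by
    have : U k ≠ 0 := fun h => hTk (congrFun ((hzero k).mpr h) p₁)
    have := height_eq_zero_iff.not.mpr this
    rw [hβ]
    omega
  have hlt : height (U k - c ᵥ* U) < height (U k) := by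
    rw [hUk, Nat.lt_succ_iff, height_le_iff]
    exact sub_vecMul_mem_degreeLT hUdeg hc hdep
  refine ⟨T * (1 + updateRow 0 k c), U.updateRow k (U k - c ᵥ* U),
    mul_one_add_updateRow_mul_updateRow T U hck, sum_lt_sum (fun j _ => ?_) ⟨k, mem_univ k, ?_⟩⟩
  · by_cases hj : j = k
    · rw [hj, updateRow_self]
      exact hlt.le
    · rw [updateRow_ne hj]
  · rwa [updateRow_self]

theorem exists_mul_eq_forall_mem_degreeLE_zero [Fintype ι] [Fintype ι']
    (T : Matrix ι κ K[FreeMonoid X]) (U : Matrix κ ι' K[FreeMonoid X])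
    (hTU : ∀ p q, (T * U) p q ∈ degreeLE K 1) :
    ∃ (T' : Matrix ι κ K[FreeMonoid X]) (U' : Matrix κ ι' K[FreeMonoid X]), T' * U' = T * U ∧
      ∀ k, (∀ p, T' p k ∈ degreeLE K 0) ∨ (∀ q, U' k q ∈ degreeLE K 0) := by
  induction hN : ∑ k, height (U k) using Nat.strong_induction_on generalizing T U with
  | _ N ih =>
  obtain ⟨T₁, U₁, h₁, hzero, hle⟩ := exists_mul_eq_and_forall_transpose_eq_zero_iff T U
  by_cases hconst : ∀ k, height (T₁ᵀ k) ≤ 1 ∨ height (U₁ k) ≤ 1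
  · refine ⟨T₁, U₁, h₁, fun k => ?_⟩
    simp only [height_le_iff, degreeLT_succ] at hconst
    exact hconst k
  push Not at hconst
  obtain ⟨k₀, hT, hU⟩ := hconst
  obtain ⟨T₂, U₂, h₂, hlt⟩ := exists_mul_eq_sum_height_lt T₁ U₁ (h₁ ▸ hTU) hzero hT hU
  obtain ⟨T', U', h', hconst⟩ := ih _ (hN ▸ hlt.trans_le (sum_le_sum fun k _ => hle k)) T₂ U₂
    (by rwa [h₂, h₁]) rfl
  exact ⟨T', U', h'.trans (h₂.trans h₁), hconst⟩

end Reduction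

section FreeAlgebra

variable [CommSemiring K]

theorem equivMonoidAlgebraFreeMonoid_mem_degreeLE_one (a : K) (c : X → K) (s : Finset X) :
    FreeAlgebra.equivMonoidAlgebraFreeMonoid (algebraMap K _ a +
      ∑ i ∈ s, algebraMap K _ (c i) * FreeAlgebra.ι K i) ∈ degreeLE K 1 := by
  simp only [map_add, map_sum, map_mul, AlgEquiv.commutes]
  refine add_mem (algebraMap_mem_degreeLE a 1) (sum_mem fun i _ => ?_)
  have hι : FreeAlgebra.equivMonoidAlgebraFreeMonoid (FreeAlgebra.ι K i) =
      MonoidAlgebra.single (FreeMonoid.of i) (1 : K) := by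
    simp [FreeAlgebra.equivMonoidAlgebraFreeMonoid]
  rw [← Algebra.smul_def, hι]
  exact Submodule.smul_mem _ _ (single_mem_degreeLE (by simp) 1)

theorem equivMonoidAlgebraFreeMonoid_symm_mem_bot {x : K[FreeMonoid X]} (hx : x ∈ degreeLE K 0) :
    FreeAlgebra.equivMonoidAlgebraFreeMonoid.symm x ∈ (⊥ : Subalgebra K (FreeAlgebra K X)) := by
  rw [← algebraMap_coeff_one hx, AlgEquiv.commutes]
  exact Subalgebra.algebraMap_mem _ _

end FreeAlgebra

end FreeMonoidAlgebra

section Hollow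

variable {K : Type*} [Field K] {ι : Type*} [Fintype ι] [DecidableEq ι]

theorem Submodule.exists_isUnit_forall_col_mem (S : Submodule K (ι → K)) :
    ∃ Q : Matrix ι ι K, IsUnit Q ∧ ∃ J : Finset ι, J.card = Module.finrank K S ∧
      ∀ j ∈ J, Qᵀ j ∈ S := by
  set bS := Module.finBasis K S
  have hli : LinearIndependent K (S.subtype ∘ bS) := bS.linearIndependent.map' _ S.ker_subtype
  set b := Module.Basis.sumExtend hli
  set e := b.indexEquiv (Pi.basisFun K ι)
  have := (Pi.basisFun K ι).invertibleToMatrix (b.reindex e)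
  refine ⟨(Pi.basisFun K ι).toMatrix (b.reindex e), isUnit_of_invertible _,
    univ.map (Function.Embedding.inl.trans e.toEmbedding), by simp, ?_⟩
  intro j hj
  obtain ⟨a, -, rfl⟩ := Finset.mem_map.mp hj
  have hcol : ((Pi.basisFun K ι).toMatrix (b.reindex e))ᵀ (e (Sum.inl a)) = b (Sum.inl a) := by
    funext i
    rw [transpose_apply, Module.Basis.toMatrix_apply, Pi.basisFun_repr,
      Module.Basis.reindex_apply, Equiv.symm_apply_apply]
  have hinl : b (Sum.inl a) = S.subtype (bS a) := by
    simp only [b, Module.Basis.sumExtend, Module.Basis.reindex_apply, Module.Basis.coe_extend]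
    rfl
  simp only [Function.Embedding.trans_apply, Function.Embedding.inl_apply, Equiv.coe_toEmbedding,
    hcol, hinl]
  exact (bS a).2

theorem Matrix.exists_isUnit_mul_col_eq_zero {κ : Type*} (M : Matrix κ ι K) :
    ∃ Q : Matrix ι ι K, IsUnit Q ∧ ∃ J : Finset ι, J.card + M.rank = Fintype.card ι ∧
      ∀ i, ∀ j ∈ J, (M * Q) i j = 0 := by
  obtain ⟨Q, hQ, J, hJ, hker⟩ := (LinearMap.ker M.mulVecLin).exists_isUnit_forall_col_mem
  refine ⟨Q, hQ, J, ?_, fun i j hj => ?_⟩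
  · rw [hJ, rank, add_comm, LinearMap.finrank_range_add_finrank_ker,
      Module.finrank_fintype_fun_eq_card]
  · have := congrFun (LinearMap.mem_ker.mp (hker j hj)) i
    simpa [mul_apply, mulVec, dotProduct] using this

theorem Matrix.exists_isUnit_mul_row_eq_zero {κ : Type*} [Fintype κ] (M : Matrix ι κ K) :
    ∃ P : Matrix ι ι K, IsUnit P ∧ ∃ I : Finset ι, I.card + M.rank = Fintype.card ι ∧
      ∀ i ∈ I, ∀ j, (P * M) i j = 0 := by
  obtain ⟨Q, hQ, J, hJ, hzero⟩ := Mᵀ.exists_isUnit_mul_col_eq_zero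
  refine ⟨Qᵀ, ?_, J, by rwa [rank_transpose] at hJ, fun i hi j => ?_⟩
  · rwa [isUnit_iff_isUnit_det, det_transpose, ← isUnit_iff_isUnit_det]
  · rw [← transpose_transpose M, ← transpose_mul, transpose_apply]
    exact hzero j i hi

theorem exists_isUnit_zero_block_of_forall_mem_bot {R κ : Type*} [Ring R] [Algebra K R] [Fintype κ]
    (T : Matrix ι κ R) (U : Matrix κ ι R)
    (h : ∀ k, (∀ p, T p k ∈ (⊥ : Subalgebra K R)) ∨ ∀ q, U k q ∈ (⊥ : Subalgebra K R)) :
    ∃ P Q : Matrix ι ι K, IsUnit P ∧ IsUnit Q ∧ ∃ I J : Finset ι,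
      2 * Fintype.card ι ≤ I.card + J.card + Fintype.card κ ∧
      ∀ i ∈ I, ∀ j ∈ J, (P.map (algebraMap K R) * (T * U) * Q.map (algebraMap K R)) i j = 0 := by
  classical
  choose! f hf using fun x : R => (Algebra.mem_bot (R := K) (x := x)).mp
  set Z := univ.filter fun k => ∀ q, U k q ∈ (⊥ : Subalgebra K R)
  set W : Matrix κ ι K := Matrix.of fun k q => if k ∈ Z then f (U k q) else 0
  set V : Matrix ι κ K := Matrix.of fun p k => if k ∈ Z then 0 else f (T p k)
  have hW : W.rank ≤ Z.card := W.rank_le_card_of_support_subset Z fun k hk => mem_coe.mpr <| by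
    by_contra hkZ
    exact hk (funext fun q => by simp [W, hkZ])
  have hV : V.rank ≤ Zᶜ.card := by
    rw [← rank_transpose]
    refine Vᵀ.rank_le_card_of_support_subset Zᶜ fun k hk => mem_coe.mpr ?_
    by_contra hkZ
    exact hk (funext fun p => by simp_all [V])
  obtain ⟨Q, hQ, J, hJ, hWQ⟩ := W.exists_isUnit_mul_col_eq_zero
  obtain ⟨P, hP, I, hI, hPV⟩ := V.exists_isUnit_mul_row_eq_zero
  refine ⟨P, Q, hP, hQ, I, J, by have := card_add_card_compl Z; omega, fun i hi j hj => ?_⟩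
  rw [← Matrix.mul_assoc _ T U, Matrix.mul_assoc _ U, mul_apply]
  refine sum_eq_zero fun k _ => ?_
  by_cases hk : k ∈ Z
  · have hUQ : (U * Q.map (algebraMap K R)) k j = algebraMap K R ((W * Q) k j) := by
      simp [mul_apply, W, hk, hf _ ((mem_filter.mp hk).2 _)]
    rw [hUQ, hWQ k j hj, map_zero, mul_zero]
  · have hPT : (P.map (algebraMap K R) * T) i k = algebraMap K R ((P * V) i k) := by
      have hTk : ∀ p, T p k ∈ (⊥ : Subalgebra K R) :=
        (h k).resolve_right fun hU => hk (mem_filter.mpr ⟨mem_univ k, hU⟩)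
      simp [mul_apply, V, hk, hf _ (hTk _)]
    rw [hPT, hPV i hi k, map_zero, zero_mul]

end Hollow

/-- A linear square matrix over the free associative algebra `K⟨x₁,…,x_d⟩` which is
not full is associated over `K` to a (linear) hollow matrix: there are invertible
matrices `P, Q` over `K` such that `P A Q` has a `k × l` zero submatrix with
`k + l > n`. -/
theorem nonfull_linear_associated_to_hollow {K : Type*} [Field K] {d n : ℕ}
    (A₀ : Matrix (Fin n) (Fin n) K) (Ac : Fin d → Matrix (Fin n) (Fin n) K)
    (A : Matrix (Fin n) (Fin n) (FreeAlgebra K (Fin d)))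
    (hA : A = Matrix.of fun p q =>
      algebraMap K (FreeAlgebra K (Fin d)) (A₀ p q)
        + ∑ i : Fin d, algebraMap K (FreeAlgebra K (Fin d)) (Ac i p q) * FreeAlgebra.ι K i)
    (hnotfull : ∃ (m : ℕ) (T : Matrix (Fin n) (Fin m) (FreeAlgebra K (Fin d)))
      (U : Matrix (Fin m) (Fin n) (FreeAlgebra K (Fin d))), m < n ∧ A = T * U) :
    ∃ P Q : Matrix (Fin n) (Fin n) K, IsUnit P ∧ IsUnit Q ∧
      ∃ I J : Finset (Fin n), n < I.card + J.card ∧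
        ∀ i ∈ I, ∀ j ∈ J,
          (P.map (algebraMap K (FreeAlgebra K (Fin d))) * A *
            Q.map (algebraMap K (FreeAlgebra K (Fin d)))) i j = 0 := by
  obtain ⟨m, T, U, hmn, rfl⟩ := hnotfull
  let e := FreeAlgebra.equivMonoidAlgebraFreeMonoid (R := K) (X := Fin d)
  let f : FreeAlgebra K (Fin d) →+* K[FreeMonoid (Fin d)] := e.toRingEquiv.toRingHom
  let g : K[FreeMonoid (Fin d)] →+* FreeAlgebra K (Fin d) := e.symm.toRingEquiv.toRingHom
  obtain ⟨T', U', hTU', hconst⟩ := FreeMonoidAlgebra.exists_mul_eq_forall_mem_degreeLE_zero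
    (T.map f) (U.map f) fun p q => by
      rw [← RingHom.map_matrix_mul T U p q f, hA, of_apply]
      exact FreeMonoidAlgebra.equivMonoidAlgebraFreeMonoid_mem_degreeLE_one _ _ _
  have hTU : T * U = T'.map g * U'.map g := by
    ext p q : 1
    rw [← RingHom.map_matrix_mul T' U' p q g, hTU', ← RingHom.map_matrix_mul T U p q f]
    exact (e.symm_apply_apply _).symm
  obtain ⟨P, Q, hP, hQ, I, J, hcard, hzero⟩ := exists_isUnit_zero_block_of_forall_mem_bot
    (T'.map g) (U'.map g) fun k => (hconst k).imp
      (fun h p => FreeMonoidAlgebra.equivMonoidAlgebraFreeMonoid_symm_mem_bot (h p))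
      (fun h q => FreeMonoidAlgebra.equivMonoidAlgebraFreeMonoid_symm_mem_bot (h q))
  refine ⟨P, Q, hP, hQ, I, J, by simp only [Fintype.card_fin] at hcard; omega, ?_⟩
  rwa [hTU]
end

section
/- Let K be a commutative field and X = {x₁,…,x_d} a finite alphabet (d ≥ 1). A formal power series f : X* → K is rational if and only if it is recognizable, i.e. if and only if there exist n ∈ ℕ, a monoid homomorphism μ : X* → K^{n×n} (into n × n matrices under matrix multiplication), and vectors α ∈ K^{1×n}, β ∈ K^{n×1} such that (f, w) = α μ(w) β for all w ∈ X*. -/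
open Matrix

/-- The Cauchy (convolution) product of two formal power series in noncommuting
variables: `(f g, w) = ∑_{u v = w} (f, u) (g, v)`. -/
def seriesMul {K : Type*} [Field K] {d : ℕ} (f g : FreeMonoid (Fin d) → K) :
    FreeMonoid (Fin d) → K := fun w =>
  ∑ n ∈ Finset.range (w.toList.length + 1),
    f (FreeMonoid.ofList (w.toList.take n)) * g (FreeMonoid.ofList (w.toList.drop n))

/-- Convolution powers of a series: `f⁰` is the characteristic series of the
empty word, and `f^{n+1} = f · fⁿ`. -/
def seriesPow {K : Type*} [Field K] {d : ℕ} (f : FreeMonoid (Fin d) → K) :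
    ℕ → FreeMonoid (Fin d) → K
  | 0 => fun w => if w.toList = [] then 1 else 0
  | n + 1 => seriesMul f (seriesPow f n)

/-- The quasiinverse `f⁺ = ∑_{n ≥ 1} fⁿ` of a series `f`; for a series with zero
constant coefficient, `(fⁿ, w) = 0` as soon as `n` exceeds the length of `w`,
so the sum may be truncated at the length of `w`. -/
def seriesQPlus {K : Type*} [Field K] {d : ℕ} (f : FreeMonoid (Fin d) → K) :
    FreeMonoid (Fin d) → K := fun w =>
  ∑ n ∈ Finset.Icc 1 w.toList.length, seriesPow f n w

/-- The set of rational series: the smallest set of series containing the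
polynomials (series of finite support) and closed under scalar multiplication,
sum, product and quasiinverse (of series with zero constant coefficient). -/
inductive IsRationalSeries {K : Type*} [Field K] {d : ℕ} :
    (FreeMonoid (Fin d) → K) → Prop
  | poly (f : FreeMonoid (Fin d) → K) (hf : (Function.support f).Finite) :
      IsRationalSeries f
  | smul (c : K) (f : FreeMonoid (Fin d) → K) (hf : IsRationalSeries f) :
      IsRationalSeries fun w => c * f w
  | add (f g : FreeMonoid (Fin d) → K) (hf : IsRationalSeries f)
      (hg : IsRationalSeries g) : IsRationalSeries fun w => f w + g w
  | mul (f g : FreeMonoid (Fin d) → K) (hf : IsRationalSeries f)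
      (hg : IsRationalSeries g) : IsRationalSeries (seriesMul f g)
  | qinv (f : FreeMonoid (Fin d) → K) (hf : IsRationalSeries f) (h0 : f 1 = 0) :
      IsRationalSeries (seriesQPlus f)

/-!
Rational ⇒ recognizable: call a subspace of series stable if it is closed under the left
quotients `a⁻¹f : u ↦ f (a u)`. A series in a finite-dimensional stable subspace `V` is
recognizable: `f w = (w⁻¹f)(1)`, and the quotient maps have matrices in a basis of `V`.
A polynomial has only finitely many distinct quotients `u⁻¹f`, and the rules
`a⁻¹(f g) = f(1) • a⁻¹g + (a⁻¹f) g` and `f⁺ = f + f f⁺` produce such subspaces for sums,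
products and quasi-inverses.

Recognizable ⇒ rational: the series `gᵢ(w) = (μ(w) β)ᵢ` satisfy `gᵢ = Σⱼ cᵢⱼ gⱼ + gᵢ(1)` with
`cᵢⱼ = Σₐ μ(a)ᵢⱼ a`. By Arden's lemma, `X = c X + h` with `c(1) = 0` has the unique solution
`h + c⁺ h`, which eliminates the unknowns one at a time while keeping all coefficients rational.
-/

section Schuetzenberger

variable {K : Type*} [Field K] {d : ℕ}

local notation "X*" => FreeMonoid (Fin d)

local infixl:70 " ⋆ " => seriesMul

/-! ### Left quotients and the Cauchy product -/

def seriesOne : X* → K := fun w => if w.toList = [] then 1 else 0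

def leftQuot (a : Fin d) : (X* → K) →ₗ[K] (X* → K) :=
  LinearMap.funLeft K K (FreeMonoid.of a * ·)

theorem leftQuot_apply (a : Fin d) (f : X* → K) (u : X*) :
    leftQuot a f u = f (FreeMonoid.of a * u) := rfl

theorem ext_of_leftQuot {f g : X* → K} (h1 : f 1 = g 1)
    (hquot : ∀ a, leftQuot a f = leftQuot a g) : f = g := by
  funext w
  cases w with
  | one => exact h1
  | of_mul a u => exact congrFun (hquot a) u

@[simp]
theorem seriesOne_apply_one : (seriesOne (1 : X*) : K) = 1 := if_pos rfl

@[simp]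
theorem leftQuot_seriesOne (a : Fin d) : leftQuot a (seriesOne : X* → K) = 0 := by
  funext u
  simp [leftQuot_apply, seriesOne]

theorem seriesMul_apply_one (f g : X* → K) : (f ⋆ g) 1 = f 1 * g 1 := by
  simp [seriesMul]

theorem seriesMul_apply_of_mul (f g : X* → K) (a : Fin d) (u : X*) :
    (f ⋆ g) (FreeMonoid.of a * u) = f 1 * g (FreeMonoid.of a * u) + (leftQuot a f ⋆ g) u := by
  simp only [seriesMul, FreeMonoid.toList_mul, FreeMonoid.toList_of, List.singleton_append,
    List.length_cons, leftQuot_apply]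
  rw [Finset.sum_range_succ', add_comm]
  simp [FreeMonoid.ofList_cons]

theorem seriesMul_apply_congr_right (f : X* → K) {g g'} {w : X*}
    (hg : ∀ v : X*, v.toList.length ≤ w.toList.length → g v = g' v) :
    (f ⋆ g) w = (f ⋆ g') w :=
  Finset.sum_congr rfl fun k _ => by
    rw [hg]
    simp

theorem add_seriesMul (f f' g : X* → K) : (f + f') ⋆ g = f ⋆ g + f' ⋆ g := by
  funext w
  simp [seriesMul, add_mul, Finset.sum_add_distrib]

theorem smul_seriesMul (c : K) (f g : X* → K) : (c • f) ⋆ g = c • (f ⋆ g) := by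
  funext w
  simp [seriesMul, Finset.mul_sum, mul_assoc]

theorem seriesMul_add (f g g' : X* → K) : f ⋆ (g + g') = f ⋆ g + f ⋆ g' := by
  funext w
  simp [seriesMul, mul_add, Finset.sum_add_distrib]

theorem seriesMul_smul (c : K) (f g : X* → K) : f ⋆ (c • g) = c • (f ⋆ g) := by
  funext w
  simp [seriesMul, Finset.mul_sum, mul_left_comm]

def seriesMulₗ : (X* → K) →ₗ[K] (X* → K) →ₗ[K]
    (X* → K) :=
  LinearMap.mk₂ K seriesMul add_seriesMul smul_seriesMul seriesMul_add seriesMul_smul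

@[simp]
theorem seriesMulₗ_apply (f g : X* → K) : seriesMulₗ f g = f ⋆ g := rfl

theorem seriesMul_sum (f : X* → K) {ι : Type*} (s : Finset ι)
    (F : ι → X* → K) : f ⋆ ∑ i ∈ s, F i = ∑ i ∈ s, f ⋆ F i := by
  exact map_sum (seriesMulₗ f) F s

theorem zero_seriesMul (g : X* → K) : 0 ⋆ g = 0 := by
  funext w
  simp [seriesMul]

theorem leftQuot_seriesMul (f g : X* → K) (a : Fin d) :
    leftQuot a (f ⋆ g) = f 1 • leftQuot a g + leftQuot a f ⋆ g :=
  funext fun u => seriesMul_apply_of_mul f g a u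

theorem seriesOne_seriesMul (g : X* → K) : seriesOne ⋆ g = g :=
  ext_of_leftQuot (by simp [seriesMul_apply_one]) fun a => by
    simp [leftQuot_seriesMul, zero_seriesMul]

theorem seriesMul_seriesOne (f : X* → K) : f ⋆ seriesOne = f := by
  funext w
  induction w using FreeMonoid.inductionOn' generalizing f with
  | one => simp [seriesMul_apply_one]
  | of_mul a u ih => simp [seriesMul_apply_of_mul, ih, seriesOne, leftQuot_apply]

theorem seriesMul_assoc (f g h : X* → K) : f ⋆ g ⋆ h = f ⋆ (g ⋆ h) := by
  funext w
  induction w using FreeMonoid.inductionOn' generalizing f with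
  | one => simp [seriesMul_apply_one, mul_assoc]
  | of_mul a u ih =>
    simp only [seriesMul_apply_of_mul, leftQuot_seriesMul, add_seriesMul, smul_seriesMul,
      seriesMul_apply_one, Pi.add_apply, Pi.smul_apply, smul_eq_mul, ih]
    ring

/-! ### The quasi-inverse -/

theorem seriesMul_apply_eq_zero (f : X* → K) {g} {w : X*}
    (hg : ∀ v : X*, v.toList.length ≤ w.toList.length → g v = 0) :
    (f ⋆ g) w = 0 := by
  rw [seriesMul_apply_congr_right f (g' := 0) hg, ← seriesMulₗ_apply, map_zero, Pi.zero_apply]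

theorem seriesPow_apply_eq_zero {f : X* → K} (hf : f 1 = 0) {n : ℕ} {w : X*}
    (hw : w.toList.length < n) : seriesPow f n w = 0 := by
  induction n generalizing w with
  | zero => exact absurd hw (Nat.not_lt_zero _)
  | succ n ih =>
    cases w with
    | one => rw [seriesPow, seriesMul_apply_one, hf, zero_mul]
    | of_mul a u =>
      rw [seriesPow, seriesMul_apply_of_mul, hf, zero_mul, zero_add]
      refine seriesMul_apply_eq_zero _ fun v hv => ih ?_
      simp only [FreeMonoid.toList_mul, FreeMonoid.toList_of, List.singleton_append,
        List.length_cons] at hw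
      omega

theorem seriesQPlus_apply_eq_sum {f : X* → K} (hf : f 1 = 0) {N : ℕ} {w : X*}
    (hN : w.toList.length ≤ N) :
    seriesQPlus f w = ∑ n ∈ Finset.range N, seriesPow f (n + 1) w := by
  have hIcc : seriesQPlus f w = ∑ n ∈ Finset.range w.toList.length, seriesPow f (n + 1) w := by
    rw [Finset.range_eq_Ico, Finset.sum_Ico_add' (fun n => seriesPow f n w)]
    rfl
  rw [hIcc]
  refine Finset.sum_subset (Finset.range_subset_range.2 hN) fun n _ hn => ?_
  exact seriesPow_apply_eq_zero hf (by simp at hn; omega)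

theorem seriesQPlus_eq_add_seriesMul {f : X* → K} (hf : f 1 = 0) :
    seriesQPlus f = f + f ⋆ seriesQPlus f := by
  funext w
  have htrunc : (f ⋆ seriesQPlus f) w =
      (f ⋆ ∑ n ∈ Finset.range w.toList.length, seriesPow f (n + 1)) w :=
    seriesMul_apply_congr_right f fun v hv => by
      rw [seriesQPlus_apply_eq_sum hf hv, Finset.sum_apply]
  rw [Pi.add_apply, htrunc, seriesMul_sum, Finset.sum_apply,
    seriesQPlus_apply_eq_sum hf (Nat.le_succ _), Finset.sum_range_succ', add_comm]
  congr 1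
  exact congrFun (seriesMul_seriesOne f) w

/-! ### Subspaces stable under left quotients -/

def IsLeftQuotientStable (V : Submodule K (X* → K)) : Prop :=
  ∀ a, V ≤ V.comap (leftQuot a)

theorem exists_matrix_repr_of_mem_stable (V : Submodule K (X* → K))
    [FiniteDimensional K V] (hV : IsLeftQuotientStable V) {f : X* → K}
    (hf : f ∈ V) :
    ∃ (n : ℕ) (α : Matrix (Fin 1) (Fin n) K) (μ : X* →* Matrix (Fin n) (Fin n) K)
      (β : Matrix (Fin n) (Fin 1) K), ∀ w, f w = (α * μ w * β) 0 0 := by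
  let b := Module.finBasis K V
  let T : Fin d → Module.End K V := fun a => (leftQuot a).restrict fun _ hh => hV a hh
  -- Quotients compose contravariantly, `(u v)⁻¹f = v⁻¹(u⁻¹f)`, hence the transposes.
  let μ : X* →* Matrix _ _ K :=
    FreeMonoid.lift fun a => (LinearMap.toMatrix b b (T a))ᵀ
  let β : Fin _ → K := fun i => (b i : X* → K) 1
  have key : ∀ w (h : V), (h : X* → K) w = b.repr h ⬝ᵥ (μ w *ᵥ β) := by
    intro w
    induction w using FreeMonoid.inductionOn' with
    | one =>
      intro h
      conv_lhs => rw [← b.sum_repr h]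
      simp only [Submodule.coe_sum, Submodule.coe_smul, Finset.sum_apply, Pi.smul_apply,
        smul_eq_mul, map_one, one_mulVec, dotProduct, β]
    | of_mul a u ih =>
      intro h
      rw [show (h : X* → K) (FreeMonoid.of a * u) = (T a h : _ → K) u from rfl,
        ih, ← LinearMap.toMatrix_mulVec_repr b b (T a) h, ← vecMul_transpose,
        ← dotProduct_mulVec, mulVec_mulVec, map_mul, FreeMonoid.lift_eval_of]
  refine ⟨_, Matrix.replicateRow (Fin 1) (b.repr ⟨f, hf⟩), μ, Matrix.replicateCol (Fin 1) β,
    fun w => ?_⟩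
  rw [← replicateRow_vecMul, replicateRow_mul_replicateCol_apply, ← dotProduct_mulVec]
  exact key w ⟨f, hf⟩

theorem IsLeftQuotientStable.sup {V V' : Submodule K (X* → K)}
    (hV : IsLeftQuotientStable V) (hV' : IsLeftQuotientStable V') :
    IsLeftQuotientStable (V ⊔ V') := fun a =>
  sup_le ((hV a).trans (Submodule.comap_mono le_sup_left))
    ((hV' a).trans (Submodule.comap_mono le_sup_right))

theorem IsLeftQuotientStable.map_seriesMul_sup {V V' : Submodule K (X* → K)}
    (hV : IsLeftQuotientStable V) (hV' : IsLeftQuotientStable V') {g : X* → K}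
    (hg : ∀ a, leftQuot a g ∈ V.map (seriesMulₗ.flip g) ⊔ V') :
    IsLeftQuotientStable (V.map (seriesMulₗ.flip g) ⊔ V') := fun a => by
  refine sup_le (Submodule.map_le_iff_le_comap.2 fun x hx => ?_)
    ((hV' a).trans (Submodule.comap_mono le_sup_right))
  simp only [Submodule.mem_comap, LinearMap.flip_apply, seriesMulₗ_apply, leftQuot_seriesMul]
  exact add_mem (Submodule.smul_mem _ _ (hg a))
    (Submodule.mem_sup_left (Submodule.mem_map_of_mem (hV a hx)))

def HasFiniteStableSubspace (f : X* → K) : Prop :=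
  ∃ V : Submodule K (X* → K), FiniteDimensional K V ∧ IsLeftQuotientStable V ∧ f ∈ V

theorem finite_range_leftQuotients {f : X* → K} (hf : (Function.support f).Finite) :
    (Set.range fun u w : X* => f (u * w)).Finite := by
  let P := FreeMonoid.toList ⁻¹' ⋃ s ∈ Function.support f, {l | l ∈ s.toList.inits}
  have hP : P.Finite := (hf.biUnion fun s _ => List.finite_toSet _).preimage
    FreeMonoid.toList.injective.injOn
  refine ((hP.image fun u w => f (u * w)).insert 0).subset ?_
  rintro _ ⟨u, rfl⟩
  by_cases hu : u ∈ P
  · exact Or.inr ⟨u, hu, rfl⟩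
  · refine Or.inl (funext fun w => by_contra fun hw => hu ?_)
    simp only [P, Set.mem_preimage, Set.mem_iUnion, Set.mem_ofPred_eq, List.mem_inits]
    exact ⟨u * w, hw, List.prefix_append _ _⟩

namespace HasFiniteStableSubspace

theorem of_finite_support {f : X* → K} (hf : (Function.support f).Finite) :
    HasFiniteStableSubspace f := by
  refine ⟨_, FiniteDimensional.span_of_finite K (finite_range_leftQuotients hf), fun a => ?_,
    Submodule.subset_span ⟨1, by simp⟩⟩
  refine Submodule.span_le.2 ?_
  rintro _ ⟨u, rfl⟩
  exact Submodule.subset_span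
    ⟨u * FreeMonoid.of a, funext fun w => by simp [leftQuot_apply, mul_assoc]⟩

theorem smul {f : X* → K} (c : K) (hf : HasFiniteStableSubspace f) :
    HasFiniteStableSubspace (c • f) := by
  obtain ⟨V, hVfin, hV, hfV⟩ := hf
  exact ⟨V, hVfin, hV, V.smul_mem c hfV⟩

theorem add {f g : X* → K} (hf : HasFiniteStableSubspace f)
    (hg : HasFiniteStableSubspace g) : HasFiniteStableSubspace (f + g) := by
  obtain ⟨V, hVfin, hV, hfV⟩ := hf
  obtain ⟨V', hV'fin, hV', hgV'⟩ := hg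
  exact ⟨V ⊔ V', inferInstance, hV.sup hV', Submodule.add_mem_sup hfV hgV'⟩

theorem mul {f g : X* → K} (hf : HasFiniteStableSubspace f)
    (hg : HasFiniteStableSubspace g) : HasFiniteStableSubspace (f ⋆ g) := by
  obtain ⟨V, hVfin, hV, hfV⟩ := hf
  obtain ⟨V', hV'fin, hV', hgV'⟩ := hg
  refine ⟨V.map (seriesMulₗ.flip g) ⊔ V', inferInstance,
    hV.map_seriesMul_sup hV' fun a => Submodule.mem_sup_right (hV' a hgV'),
    Submodule.mem_sup_left (Submodule.mem_map_of_mem hfV)⟩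

theorem qinv {f : X* → K} (hf : HasFiniteStableSubspace f)
    (hf1 : f 1 = 0) : HasFiniteStableSubspace (seriesQPlus f) := by
  obtain ⟨V, hVfin, hV, hfV⟩ := hf
  have hfix := seriesQPlus_eq_add_seriesMul hf1
  have hmem : ∀ {x}, x ∈ V →
      x ⋆ seriesQPlus f ∈ V.map (seriesMulₗ.flip (seriesQPlus f)) ⊔ V :=
    fun hx => Submodule.mem_sup_left (Submodule.mem_map_of_mem hx)
  refine ⟨V.map (seriesMulₗ.flip (seriesQPlus f)) ⊔ V, inferInstance,
    hV.map_seriesMul_sup hV fun a => ?_, ?_⟩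
  · have hquot : leftQuot a (seriesQPlus f) = leftQuot a f + leftQuot a f ⋆ seriesQPlus f := by
      conv_lhs => rw [hfix]
      rw [map_add, leftQuot_seriesMul, hf1, zero_smul, zero_add]
    rw [hquot]
    exact add_mem (Submodule.mem_sup_right (hV a hfV)) (hmem (hV a hfV))
  · have h := add_mem (Submodule.mem_sup_right hfV) (hmem hfV)
    rwa [← hfix] at h

end HasFiniteStableSubspace

theorem IsRationalSeries.hasFiniteStableSubspace {f : X* → K}
    (hf : IsRationalSeries f) : HasFiniteStableSubspace f := by
  induction hf with
  | poly f hf => exact .of_finite_support hf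
  | smul c f _ ih => exact ih.smul c
  | add f g _ _ ihf ihg => exact ihf.add ihg
  | mul f g _ _ ihf ihg => exact ihf.mul ihg
  | qinv f _ hf1 ih => exact ih.qinv hf1

/-! ### Proper linear systems -/

theorem IsRationalSeries.sum {ι : Type*} (s : Finset ι) {F : ι → X* → K}
    (hF : ∀ i ∈ s, IsRationalSeries (F i)) : IsRationalSeries (∑ i ∈ s, F i) := by
  classical
  induction s using Finset.induction_on with
  | empty => exact .poly 0 (by simp)
  | insert i s hi ih =>
    rw [Finset.sum_insert hi]
    exact .add _ _ (hF i (s.mem_insert_self i)) (ih fun j hj => hF j (Finset.mem_insert_of_mem hj))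

theorem eq_zero_of_eq_seriesMul {c e : X* → K} (hc : c 1 = 0) (he : e = c ⋆ e) :
    e = 0 := by
  funext w
  induction hn : w.toList.length using Nat.strong_induction_on generalizing w with
  | _ n ih =>
    cases w with
    | one => rw [he, seriesMul_apply_one, hc, zero_mul, Pi.zero_apply]
    | of_mul a u =>
      rw [he, seriesMul_apply_of_mul, hc, zero_mul, zero_add]
      refine seriesMul_apply_eq_zero _ fun v hv => ih _ ?_ v rfl
      simp only [FreeMonoid.toList_mul, FreeMonoid.toList_of, List.singleton_append,
        List.length_cons] at hn
      omega

theorem eq_add_seriesQPlus_mul_of_eq {c g h : X* → K} (hc : c 1 = 0)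
    (hg : g = c ⋆ g + h) : g = h + seriesQPlus c ⋆ h := by
  set x := h + seriesQPlus c ⋆ h with hx
  have hsol : x = c ⋆ x + h := by
    conv_lhs => rw [hx, seriesQPlus_eq_add_seriesMul hc]
    rw [hx, add_seriesMul, seriesMul_add, seriesMul_assoc]
    abel
  refine sub_eq_zero.1 (eq_zero_of_eq_seriesMul hc ?_)
  rw [show c ⋆ (g - x) = c ⋆ g - c ⋆ x from map_sub (seriesMulₗ c) g x]
  conv_lhs => rw [hg, hsol]
  abel

theorem isRationalSeries_of_linear_system {n : ℕ} (c : Fin n → Fin n → X* → K)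
    (p g : Fin n → X* → K) (hc : ∀ i j, IsRationalSeries (c i j))
    (hc1 : ∀ i j, c i j 1 = 0) (hp : ∀ i, IsRationalSeries (p i))
    (hg : ∀ i, g i = ∑ j, c i j ⋆ g j + p i) (i : Fin n) : IsRationalSeries (g i) := by
  induction n with
  | zero => exact i.elim0
  | succ n ih =>
    set L := Fin.last n with hL
    set q := seriesQPlus (c L L)
    have hq : IsRationalSeries q := .qinv _ (hc L L) (hc1 L L)
    set h := ∑ j : Fin n, c L j.castSucc ⋆ g j.castSucc + p L with h_def
    have hgL : g L = h + q ⋆ h := by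
      refine eq_add_seriesQPlus_mul_of_eq (hc1 L L) ?_
      conv_lhs => rw [hg L, Fin.sum_univ_castSucc, ← hL]
      rw [h_def]
      abel
    set e := fun i : Fin n => c i.castSucc L + c i.castSucc L ⋆ q
    have he : ∀ i, IsRationalSeries (e i) := fun i => .add _ _ (hc _ _) (.mul _ _ (hc _ _) hq)
    have hreduced : ∀ i : Fin n, g i.castSucc =
        ∑ j : Fin n, (c i.castSucc j.castSucc + e i ⋆ c L j.castSucc) ⋆ g j.castSucc +
          (p i.castSucc + e i ⋆ p L) := fun i => by
      conv_lhs => rw [hg, Fin.sum_univ_castSucc, ← hL, hgL, h_def]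
      simp only [e, seriesMul_add, seriesMul_sum, ← seriesMul_assoc, add_seriesMul,
        Finset.sum_add_distrib]
      abel
    have hrest := ih (fun i j => c i.castSucc j.castSucc + e i ⋆ c L j.castSucc)
      (fun i => p i.castSucc + e i ⋆ p L) (fun i => g i.castSucc)
      (fun i j => .add _ _ (hc _ _) (.mul _ _ (he i) (hc _ _)))
      (fun i j => by simp [seriesMul_apply_one, hc1])
      (fun i => .add _ _ (hp _) (.mul _ _ (he i) (hp _))) hreduced
    have hh : IsRationalSeries h :=
      .add _ _ (.sum _ fun j _ => .mul _ _ (hc _ _) (hrest j)) (hp L)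
    induction i using Fin.lastCases with
    | last => rw [hgL]; exact .add _ _ hh (.mul _ _ hq hh)
    | cast i => exact hrest i

theorem isRationalSeries_of_leftQuot_eq_sum {n : ℕ} (g : Fin n → X* → K)
    (m : Fin d → Matrix (Fin n) (Fin n) K)
    (hg : ∀ a i, leftQuot a (g i) = ∑ j, m a i j • g j) (i : Fin n) : IsRationalSeries (g i) := by
  classical
  let c : Fin n → Fin n → X* → K :=
    fun i j => ∑ a, Pi.single (FreeMonoid.of a) (m a i j)
  have hc1 : ∀ i j, c i j 1 = 0 := by
    simp [c]
  have hquot : ∀ b i j, leftQuot b (c i j) = m b i j • seriesOne := by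
    intro b i j
    funext u
    simp [c, leftQuot_apply, Pi.single_apply, seriesOne, ← FreeMonoid.toList.injective.eq_iff,
      ite_and]
  refine isRationalSeries_of_linear_system c (fun i => g i 1 • seriesOne) g
    (fun i j => .sum _ fun a _ =>
      .poly _ ((Set.finite_singleton _).subset Pi.support_single_subset))
    hc1 (fun i => .smul _ _ (.poly _ ((Set.finite_singleton 1).subset fun w hw => ?_)))
    (fun i => ext_of_leftQuot ?_ fun b => ?_) i
  · exact FreeMonoid.toList.injective (by simpa [seriesOne] using hw)
  · simp [Finset.sum_apply, seriesMul_apply_one, hc1]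
  · simp [map_sum, leftQuot_seriesMul, hc1, hquot, smul_seriesMul, seriesOne_seriesMul, hg]

theorem IsRationalSeries.of_matrix_repr {n : ℕ} (α : Matrix (Fin 1) (Fin n) K)
    (μ : X* →* Matrix (Fin n) (Fin n) K) (β : Matrix (Fin n) (Fin 1) K) :
    IsRationalSeries fun w => (α * μ w * β) 0 0 := by
  let g : Fin n → X* → K := fun i w => (μ w * β) i 0
  have hg : ∀ i, IsRationalSeries (g i) :=
    isRationalSeries_of_leftQuot_eq_sum g (fun a => μ (FreeMonoid.of a)) fun a i => by
      funext u
      simp only [leftQuot_apply, Finset.sum_apply, Pi.smul_apply, smul_eq_mul, g]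
      rw [map_mul, Matrix.mul_assoc, Matrix.mul_apply]
  have hsum : (fun w => (α * μ w * β) 0 0) = ∑ i, α 0 i • g i := by
    funext w
    rw [Matrix.mul_assoc, Matrix.mul_apply]
    simp [g, Finset.sum_apply]
  rw [hsum]
  exact .sum _ fun i _ => .smul _ _ (hg i)

end Schuetzenberger

theorem rational_iff_recognizable_general {K : Type*} [Field K] {d : ℕ}
    (f : FreeMonoid (Fin d) → K) :
    IsRationalSeries f ↔
      ∃ (n : ℕ) (α : Matrix (Fin 1) (Fin n) K)
        (μ : FreeMonoid (Fin d) →* Matrix (Fin n) (Fin n) K)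
        (β : Matrix (Fin n) (Fin 1) K),
        ∀ w, f w = (α * μ w * β) 0 0 := by
  constructor
  · intro hf
    obtain ⟨V, _, hV, hfV⟩ := hf.hasFiniteStableSubspace
    exact exists_matrix_repr_of_mem_stable V hV hfV
  · rintro ⟨n, α, μ, β, hf⟩
    obtain rfl : f = _ := funext hf
    exact .of_matrix_repr α μ β

/-- Schützenberger's theorem: a formal power series in noncommuting variables is
rational if and only if it is recognizable, i.e. `(f, w) = α μ(w) β` for a monoid
homomorphism `μ : X* → K^{n×n}` and vectors `α ∈ K^{1×n}`, `β ∈ K^{n×1}`. -/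
theorem rational_iff_recognizable {K : Type*} [Field K] {d : ℕ} (hd : 1 ≤ d)
    (f : FreeMonoid (Fin d) → K) :
    IsRationalSeries f ↔
      ∃ (n : ℕ) (α : Matrix (Fin 1) (Fin n) K)
        (μ : FreeMonoid (Fin d) →* Matrix (Fin n) (Fin n) K)
        (β : Matrix (Fin n) (Fin 1) K),
        ∀ w, f w = (α * μ w * β) 0 0 :=
  rational_iff_recognizable_general f
end
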